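/- arXiv:2112.03661 — 6 statements merged into one kernel-verified Lean document; each statement's English description precedes it below -/
import Mathlib

section
/- Let G be a finite connected graph with positive conductances and p > 1. If θ and η are two flows from a to b that both satisfy the cycle law and have equal strength (∑_{x∼a} θ(ax) = ∑_{x∼a} η(ax)), then θ = η. -/
/-!
With `F t = t / |t| ^ ((p - 2) / (p - 1))`, which is odd and strictly increasing because
`(p - 2) / (p - 1) < 1`, the cycle law says that the edge function `r ^ (1 / (p - 1)) * F ∘ θ`
sums to zero around every closed walk; on a connected graph it is therefore the gradient of a
potential `u_θ`, and likewise for `η`. The difference `θ - η` is antisymmetric and divergence-free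
at every vertex: at `a` by equal strength, elsewhere but at `b` by the node law, and then at `b`
because the total divergence of an antisymmetric function vanishes. Summation by parts thus gives
`∑_{x ∼ y} (θ - η)(x, y) ((u_θ - u_η)(y) - (u_θ - u_η)(x)) = 0`. Each summand equals
`r ^ (1 / (p - 1)) (θ - η)(F θ - F η) ≥ 0`, so all vanish, and strict monotonicity of `F` forces
`θ = η` on every edge.
-/

open Finset

lemma strictMono_div_abs_rpow {q : ℝ} (hq : q < 1) : StrictMono fun t : ℝ => t / |t| ^ q := by
  refine strictMono_of_odd_strictMonoOn_nonneg (fun t => by simp only [abs_neg, neg_div]) ?_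
  refine (Real.strictMonoOn_rpow_Ici_of_exponent_pos (sub_pos.2 hq)).congr fun t (ht : 0 ≤ t) => ?_
  beta_reduce
  rw [Real.rpow_sub' ht (by linarith), Real.rpow_one, abs_of_nonneg ht]

lemma StrictMono.eq_of_sub_mul_sub_eq_zero {α : Type*} [Ring α] [NoZeroDivisors α] [LinearOrder α]
    {F : α → α} (hF : StrictMono F) {s t : α} (h : (F s - F t) * (s - t) = 0) : s = t := by
  rcases mul_eq_zero.1 h with h | h
  · exact hF.injective (sub_eq_zero.1 h)
  · exact sub_eq_zero.1 h

namespace SimpleGraph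

variable {V : Type*} {G : SimpleGraph V}

lemma Walk.sum_getVert_eq_sum_darts {M : Type*} [AddCommMonoid M] (ψ : V → V → M) {u v : V}
    (w : G.Walk u v) :
    ∑ i : Fin w.length, ψ (w.getVert i) (w.getVert (i + 1)) =
      (w.darts.map fun d => ψ d.fst d.snd).sum := by
  rw [← Fin.sum_univ_fun_getElem, ← Fin.sum_congr' _ w.length_darts]
  simp [Walk.darts_getElem_eq_getVert]

namespace Connected

lemma exists_potential_of_sum_darts_eq_zero {M : Type*} [AddCommGroup M] (hconn : G.Connected)
    {ψ : V → V → M} (hψ : ∀ u (w : G.Walk u u), (w.darts.map fun d => ψ d.fst d.snd).sum = 0) :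
    ∃ f : V → M, ∀ x y, G.Adj x y → ψ x y = f y - f x := by
  obtain ⟨a⟩ := hconn.nonempty
  let W x : G.Walk a x := (hconn.preconnected a x).some
  refine ⟨fun x => ((W x).darts.map fun d => ψ d.fst d.snd).sum, fun x y hxy => ?_⟩
  -- compare the closed walks `W x ++ (x, y) ++ (W y)⁻¹` and `W y ++ (W y)⁻¹`
  have hx := hψ a ((W x).append (.cons hxy (W y).reverse))
  have hy := hψ a ((W y).append (W y).reverse)
  simp only [Walk.darts_append, Walk.darts_cons, List.map_append, List.map_cons,
    List.sum_append, List.sum_cons] at hx hy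
  rw [eq_sub_iff_add_eq, ← sub_eq_zero, ← sub_eq_zero.2 (hx.trans hy.symm)]
  abel

lemma exists_potential_of_cycle_sum_eq_zero {M : Type*} [AddCommGroup M] (hconn : G.Connected)
    {ψ : V → V → M}
    (hψ : ∀ (n : ℕ) (xs : Fin (n + 1) → V), (∀ i : Fin n, G.Adj (xs i.castSucc) (xs i.succ)) →
      xs (Fin.last n) = xs 0 → ∑ i : Fin n, ψ (xs i.castSucc) (xs i.succ) = 0) :
    ∃ f : V → M, ∀ x y, G.Adj x y → ψ x y = f y - f x :=
  hconn.exists_potential_of_sum_darts_eq_zero fun _ w => by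
    rw [← w.sum_getVert_eq_sum_darts]
    simpa using hψ w.length (fun j => w.getVert j)
      (fun i => by simpa using w.adj_getVert_succ i.isLt) (by simp)

end Connected

variable [Fintype V] [DecidableRel G.Adj]

lemma sum_sum_neighborFinset_comm {M : Type*} [AddCommMonoid M] (g : V → V → M) :
    ∑ x, ∑ y ∈ G.neighborFinset x, g x y = ∑ x, ∑ y ∈ G.neighborFinset x, g y x :=
  Finset.sum_comm' fun x y => by simp [G.adj_comm]

lemma sum_sum_neighborFinset_eq_zero {ζ : V → V → ℝ} (hζ : ∀ x y, ζ x y = -ζ y x) :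
    ∑ x, ∑ y ∈ G.neighborFinset x, ζ x y = 0 := by
  have h : ∑ x, ∑ y ∈ G.neighborFinset x, ζ x y = -∑ x, ∑ y ∈ G.neighborFinset x, ζ x y := by
    simp only [← sum_neg_distrib, ← hζ]
    exact G.sum_sum_neighborFinset_comm ζ
  linarith

lemma sum_neighborFinset_eq_zero_of_forall_ne {ζ : V → V → ℝ} (hζ : ∀ x y, ζ x y = -ζ y x)
    {b : V} (hdiv : ∀ x, x ≠ b → ∑ y ∈ G.neighborFinset x, ζ x y = 0) :
    ∑ y ∈ G.neighborFinset b, ζ b y = 0 := by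
  rw [← G.sum_sum_neighborFinset_eq_zero hζ, Finset.sum_eq_single b (fun x _ => hdiv x) (by simp)]

lemma sum_sum_neighborFinset_mul_sub {ζ : V → V → ℝ} (hζ : ∀ x y, ζ x y = -ζ y x) (h : V → ℝ) :
    ∑ x, ∑ y ∈ G.neighborFinset x, ζ x y * (h y - h x) =
      -2 * ∑ x, h x * ∑ y ∈ G.neighborFinset x, ζ x y := by
  have hswap : ∑ x, ∑ y ∈ G.neighborFinset x, ζ x y * h y =
      -∑ x, ∑ y ∈ G.neighborFinset x, ζ x y * h x := by
    rw [G.sum_sum_neighborFinset_comm]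
    simp only [← sum_neg_distrib, ← neg_mul, ← hζ]
  have hdiv : ∑ x, h x * ∑ y ∈ G.neighborFinset x, ζ x y =
      ∑ x, ∑ y ∈ G.neighborFinset x, ζ x y * h x := by
    simp only [mul_comm (h _), sum_mul]
  rw [hdiv]
  simp only [mul_sub, sum_sub_distrib, hswap]
  ring

lemma mul_sub_eq_zero_of_forall_nonneg {ζ : V → V → ℝ} (hζ : ∀ x y, ζ x y = -ζ y x)
    (hdiv : ∀ x, ∑ y ∈ G.neighborFinset x, ζ x y = 0) {h : V → ℝ}
    (hnonneg : ∀ x y, G.Adj x y → 0 ≤ ζ x y * (h y - h x)) {x y : V} (hxy : G.Adj x y) :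
    ζ x y * (h y - h x) = 0 := by
  have hsum := G.sum_sum_neighborFinset_mul_sub hζ h
  simp only [hdiv, mul_zero, sum_const_zero] at hsum
  have hx := (sum_eq_zero_iff_of_nonneg fun x _ => sum_nonneg fun y hy =>
    hnonneg x y ((G.mem_neighborFinset x y).1 hy)).1 hsum x (mem_univ x)
  exact (sum_eq_zero_iff_of_nonneg fun y hy =>
    hnonneg x y ((G.mem_neighborFinset x y).1 hy)).1 hx y ((G.mem_neighborFinset x y).2 hxy)

lemma sum_neighborFinset_sub_eq_zero_of_strength_eq {θ η : V → V → ℝ} {a b : V}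
    (hθanti : ∀ x y, θ x y = -θ y x) (hηanti : ∀ x y, η x y = -η y x)
    (hθnode : ∀ x, x ≠ a → x ≠ b → ∑ y ∈ G.neighborFinset x, θ x y = 0)
    (hηnode : ∀ x, x ≠ a → x ≠ b → ∑ y ∈ G.neighborFinset x, η x y = 0)
    (hstrength : ∑ x ∈ G.neighborFinset a, θ a x = ∑ x ∈ G.neighborFinset a, η a x) (x : V) :
    ∑ y ∈ G.neighborFinset x, (θ x y - η x y) = 0 := by
  have hdiv_ne_b x (hxb : x ≠ b) : ∑ y ∈ G.neighborFinset x, (θ x y - η x y) = 0 := by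
    rw [sum_sub_distrib]
    by_cases hxa : x = a
    · rw [hxa, hstrength, sub_self]
    · rw [hθnode x hxa hxb, hηnode x hxa hxb, sub_self]
  by_cases hxb : x = b
  · refine hxb ▸ G.sum_neighborFinset_eq_zero_of_forall_ne (fun x y => ?_) hdiv_ne_b
    rw [hθanti x y, hηanti x y]
    ring
  · exact hdiv_ne_b x hxb

end SimpleGraph

theorem flows_cycle_law_equal_strength_eq_general {V : Type*} [Fintype V]
    (G : SimpleGraph V) [DecidableRel G.Adj] (hconn : G.Connected)
    (p : ℝ) (hp : 1 < p)
    (c : V → V → ℝ)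
    (hc_pos : ∀ x y, G.Adj x y → 0 < c x y)
    (a b : V)
    (θ η : V → V → ℝ)
    (hθanti : ∀ x y, θ x y = -θ y x)
    (hθnode : ∀ x, x ≠ a → x ≠ b → ∑ y ∈ G.neighborFinset x, θ x y = 0)
    (hηanti : ∀ x y, η x y = -η y x)
    (hηnode : ∀ x, x ≠ a → x ≠ b → ∑ y ∈ G.neighborFinset x, η x y = 0)
    (hθcycle : ∀ (n : ℕ) (xs : Fin (n + 1) → V),
      (∀ i : Fin n, G.Adj (xs i.castSucc) (xs i.succ)) →
      xs (Fin.last n) = xs 0 →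
      ∑ i : Fin n, (c (xs i.castSucc) (xs i.succ))⁻¹ ^ ((1 : ℝ) / (p - 1)) *
        (θ (xs i.castSucc) (xs i.succ) /
          |θ (xs i.castSucc) (xs i.succ)| ^ ((p - 2) / (p - 1))) = 0)
    (hηcycle : ∀ (n : ℕ) (xs : Fin (n + 1) → V),
      (∀ i : Fin n, G.Adj (xs i.castSucc) (xs i.succ)) →
      xs (Fin.last n) = xs 0 →
      ∑ i : Fin n, (c (xs i.castSucc) (xs i.succ))⁻¹ ^ ((1 : ℝ) / (p - 1)) *
        (η (xs i.castSucc) (xs i.succ) /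
          |η (xs i.castSucc) (xs i.succ)| ^ ((p - 2) / (p - 1))) = 0)
    (hstrength : ∑ x ∈ G.neighborFinset a, θ a x = ∑ x ∈ G.neighborFinset a, η a x) :
    ∀ x y, G.Adj x y → θ x y = η x y := by
  set F : ℝ → ℝ := fun t => t / |t| ^ ((p - 2) / (p - 1))
  have hF : StrictMono F := strictMono_div_abs_rpow <| (div_lt_one (by linarith)).2 (by linarith)
  set r : V → V → ℝ := fun x y => (c x y)⁻¹ ^ ((1 : ℝ) / (p - 1))
  obtain ⟨f, hf⟩ := hconn.exists_potential_of_cycle_sum_eq_zero (ψ := fun x y => r x y * F (θ x y))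
    hθcycle
  obtain ⟨g, hg⟩ := hconn.exists_potential_of_cycle_sum_eq_zero (ψ := fun x y => r x y * F (η x y))
    hηcycle
  have hanti x y : θ x y - η x y = -(θ y x - η y x) := by rw [hθanti x y, hηanti x y]; ring
  have hdiv := G.sum_neighborFinset_sub_eq_zero_of_strength_eq hθanti hηanti hθnode hηnode hstrength
  have hpair x y (hxy : G.Adj x y) : (θ x y - η x y) * ((f - g) y - (f - g) x) =
      r x y * ((F (θ x y) - F (η x y)) * (θ x y - η x y)) := by
    rw [Pi.sub_apply, Pi.sub_apply, sub_sub_sub_comm, ← hf x y hxy, ← hg x y hxy]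
    ring
  have hr x y (hxy : G.Adj x y) : 0 < r x y := Real.rpow_pos_of_pos (inv_pos.2 (hc_pos x y hxy)) _
  intro x y hxy
  have hzero := G.mul_sub_eq_zero_of_forall_nonneg hanti hdiv (fun x y hxy => by
    rw [hpair x y hxy]
    exact mul_nonneg (hr x y hxy).le ((monovary_id_iff.2 hF.monotone).sub_mul_sub_nonneg _ _)) hxy
  rw [hpair x y hxy, mul_eq_zero, or_iff_right (hr x y hxy).ne'] at hzero
  exact hF.eq_of_sub_mul_sub_eq_zero hzero

/-- Two flows satisfying the cycle law with equal strength are equal. -/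
theorem flows_cycle_law_equal_strength_eq {V : Type*} [Fintype V] [DecidableEq V]
    (G : SimpleGraph V) [DecidableRel G.Adj] (hconn : G.Connected)
    (p : ℝ) (hp : 1 < p)
    (c : V → V → ℝ) (hc_sym : ∀ x y, c x y = c y x)
    (hc_pos : ∀ x y, G.Adj x y → 0 < c x y)
    (a b : V)
    (θ η : V → V → ℝ)
    (hθanti : ∀ x y, θ x y = -θ y x)
    (hθnode : ∀ x, x ≠ a → x ≠ b → ∑ y ∈ G.neighborFinset x, θ x y = 0)
    (hηanti : ∀ x y, η x y = -η y x)
    (hηnode : ∀ x, x ≠ a → x ≠ b → ∑ y ∈ G.neighborFinset x, η x y = 0)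
    (hθcycle : ∀ (n : ℕ) (xs : Fin (n + 1) → V),
      (∀ i : Fin n, G.Adj (xs i.castSucc) (xs i.succ)) →
      xs (Fin.last n) = xs 0 →
      ∑ i : Fin n, (c (xs i.castSucc) (xs i.succ))⁻¹ ^ ((1 : ℝ) / (p - 1)) *
        (θ (xs i.castSucc) (xs i.succ) /
          |θ (xs i.castSucc) (xs i.succ)| ^ ((p - 2) / (p - 1))) = 0)
    (hηcycle : ∀ (n : ℕ) (xs : Fin (n + 1) → V),
      (∀ i : Fin n, G.Adj (xs i.castSucc) (xs i.succ)) →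
      xs (Fin.last n) = xs 0 →
      ∑ i : Fin n, (c (xs i.castSucc) (xs i.succ))⁻¹ ^ ((1 : ℝ) / (p - 1)) *
        (η (xs i.castSucc) (xs i.succ) /
          |η (xs i.castSucc) (xs i.succ)| ^ ((p - 2) / (p - 1))) = 0)
    (hstrength : ∑ x ∈ G.neighborFinset a, θ a x = ∑ x ∈ G.neighborFinset a, η a x) :
    ∀ x y, G.Adj x y → θ x y = η x y :=
  flows_cycle_law_equal_strength_eq_general G hconn p hp c hc_pos a b θ η hθanti hθnode hηanti
    hηnode hθcycle hηcycle hstrength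
end

section
/- Let G be a finite connected graph with positive conductances and p > 1. If h_1 and h_2 are non-constant p-harmonic functions with associated current flows I_1, I_2 (defined by I(xy) = c_{xy}|h(y)-h(x)|^{p-2}(h(y)-h(x))), then the ratio |h(b)-h(a)|^{p-2}(h(b)-h(a)) / ‖I‖ is the same for h_1 and h_2, is well defined, and nonzero. (This common value is the p-effective resistance R_p(a,b).) -/
set_option linter.unusedSectionVars false

private noncomputable def psi (p t : ℝ) : ℝ := |t| ^ (p - 2) * t

private lemma psi_neg (p t : ℝ) : psi p (-t) = - psi p t := by
  simp [psi, abs_neg, mul_neg]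

private lemma psi_zero (p : ℝ) : psi p 0 = 0 := by simp [psi]

private lemma psi_of_pos {p t : ℝ} (ht : 0 < t) : psi p t = t ^ (p - 1) := by
  rw [psi, abs_of_pos ht, show (p - 1 : ℝ) = (p-2) + 1 by ring, Real.rpow_add ht,
    Real.rpow_one]

private lemma psi_pos {p t : ℝ} (ht : 0 < t) : 0 < psi p t := by
  rw [psi_of_pos ht]; exact Real.rpow_pos_of_pos ht _

private lemma psi_strictMono {p : ℝ} (hp : 1 < p) : StrictMono (psi p) := by
  have key : ∀ s t : ℝ, 0 ≤ s → s < t → psi p s < psi p t := by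
    intro s t hs hst
    have ht : 0 < t := lt_of_le_of_lt hs hst
    rcases eq_or_lt_of_le hs with h | h
    · rw [← h, psi_zero]; exact psi_pos ht
    · rw [psi_of_pos h, psi_of_pos ht]
      exact Real.rpow_lt_rpow h.le hst (by linarith)
  intro s t hst
  rcases le_or_gt 0 s with hs | hs
  · exact key s t hs hst
  · rcases le_or_gt t 0 with ht | ht
    · have := key (-t) (-s) (by linarith) (by linarith)
      rw [psi_neg, psi_neg] at this; linarith
    · have h1 : psi p s < 0 := by
        have := psi_pos (p := p) (show (0:ℝ) < -s by linarith)
        rw [psi_neg] at this; linarith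
      exact lt_trans h1 (psi_pos ht)

private lemma psi_ne_zero {p t : ℝ} (hp : 1 < p) (ht : t ≠ 0) : psi p t ≠ 0 := fun h =>
  ht ((psi_strictMono hp).injective (h.trans (psi_zero p).symm))

private lemma psi_mul (p s t : ℝ) : psi p (s * t) = psi p s * psi p t := by
  rw [psi, psi, psi, abs_mul, Real.mul_rpow (abs_nonneg s) (abs_nonneg t)]; ring

private lemma psi_surj {p : ℝ} (hp : 1 < p) (r : ℝ) : ∃ α, psi p α = r := by
  have key : ∀ r : ℝ, 0 ≤ r → ∃ α, psi p α = r := by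
    intro r hr
    rcases eq_or_lt_of_le hr with h | h
    · exact ⟨0, by rw [psi_zero, h]⟩
    · refine ⟨r ^ (p-1)⁻¹, ?_⟩
      rw [psi_of_pos (Real.rpow_pos_of_pos h _),
        Real.rpow_inv_rpow hr (by intro hq; rw [sub_eq_zero] at hq; linarith)]
  rcases le_or_gt 0 r with hr | hr
  · exact key r hr
  · obtain ⟨α, hα⟩ := key (-r) (by linarith)
    exact ⟨-α, by rw [psi_neg, hα]; ring⟩

private lemma psi_sub_mul_nonneg {p : ℝ} (hp : 1 < p) (s t : ℝ) :
    0 ≤ (s - t) * (psi p s - psi p t) := by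
  rcases le_total t s with h | h
  · have := (psi_strictMono hp).monotone h; nlinarith
  · have := (psi_strictMono hp).monotone h; nlinarith

private lemma psi_sub_mul_pos {p : ℝ} (hp : 1 < p) {s t : ℝ} (h : s ≠ t) :
    0 < (s - t) * (psi p s - psi p t) := by
  rcases h.lt_or_gt with h | h
  · have := psi_strictMono hp h; nlinarith
  · have := psi_strictMono hp h; nlinarith

section Graph

variable {V : Type*} [Fintype V] [DecidableEq V]

private lemma walk_exists_adj_ne (G : SimpleGraph V) (g : V → ℝ) :
    ∀ {x y : V}, G.Walk x y → g x ≠ g y → ∃ u v, G.Adj u v ∧ g u ≠ g v := by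
  intro x y w
  induction w with
  | nil => intro h; exact absurd rfl h
  | @cons x z y hadj w ih =>
    intro hne
    by_cases h : g x = g z
    · exact ih (fun hzy => hne (h.trans hzy))
    · exact ⟨x, z, hadj, h⟩

private lemma walk_const (G : SimpleGraph V) (g : V → ℝ)
    (hg : ∀ u v, G.Adj u v → g u = g v) :
    ∀ {x y : V}, G.Walk x y → g x = g y := by
  intro x y w
  induction w with
  | nil => rfl
  | @cons x z y hadj w ih => exact (hg x z hadj).trans ih

private lemma sum_nbr_comm (G : SimpleGraph V) [DecidableRel G.Adj] (f : V → V → ℝ) :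
    ∑ x, ∑ y ∈ G.neighborFinset x, f x y = ∑ y, ∑ x ∈ G.neighborFinset y, f x y := by
  apply Finset.sum_comm'
  intro x y
  simp only [Finset.mem_univ, true_and, and_true, SimpleGraph.mem_neighborFinset]
  exact ⟨fun h => h.symm, fun h => h.symm⟩

private lemma key_identity (G : SimpleGraph V) [DecidableRel G.Adj] (f : V → ℝ)
    (I : V → V → ℝ) (hanti : ∀ x y, I y x = - I x y) :
    2 * ∑ x, f x * ∑ y ∈ G.neighborFinset x, I x y
      = ∑ x, ∑ y ∈ G.neighborFinset x, (f x - f y) * I x y := by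
  have h1 : ∑ x, f x * ∑ y ∈ G.neighborFinset x, I x y
      = ∑ x, ∑ y ∈ G.neighborFinset x, f x * I x y := by
    simp [Finset.mul_sum]
  have h2 : ∑ x, ∑ y ∈ G.neighborFinset x, f y * I x y
      = ∑ x, ∑ y ∈ G.neighborFinset x, f x * I y x :=
    sum_nbr_comm G (fun x y => f y * I x y)
  have h3 : ∑ x, ∑ y ∈ G.neighborFinset x, f x * I y x
      = - ∑ x, ∑ y ∈ G.neighborFinset x, f x * I x y := by
    rw [← Finset.sum_neg_distrib]
    refine Finset.sum_congr rfl fun x _ => ?_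
    rw [← Finset.sum_neg_distrib]
    refine Finset.sum_congr rfl fun y _ => ?_
    rw [hanti]; ring
  have h4 : ∑ x, ∑ y ∈ G.neighborFinset x, (f x - f y) * I x y
      = ∑ x, ∑ y ∈ G.neighborFinset x, f x * I x y
        - ∑ x, ∑ y ∈ G.neighborFinset x, f y * I x y := by
    rw [← Finset.sum_sub_distrib]
    refine Finset.sum_congr rfl fun x _ => ?_
    rw [← Finset.sum_sub_distrib]
    refine Finset.sum_congr rfl fun y _ => ?_
    ring
  rw [h1, h4, h2, h3]; ring

private lemma sum_eq_pair (g : V → ℝ) (a b : V) (hab : a ≠ b)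
    (h0 : ∀ x, x ≠ a → x ≠ b → g x = 0) :
    ∑ x, g x = g a + g b := by
  rw [← Finset.sum_pair hab]
  apply (Finset.sum_subset (Finset.subset_univ _) ?_).symm
  intro x _ hx
  simp only [Finset.mem_insert, Finset.mem_singleton, not_or] at hx
  exact h0 x hx.1 hx.2

private lemma total_div (G : SimpleGraph V) [DecidableRel G.Adj] (a b : V) (hab : a ≠ b)
    (I : V → V → ℝ) (hanti : ∀ x y, I y x = - I x y)
    (hharm : ∀ x, x ≠ a → x ≠ b → ∑ y ∈ G.neighborFinset x, I x y = 0) :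
    ∑ y ∈ G.neighborFinset b, I b y = - ∑ y ∈ G.neighborFinset a, I a y := by
  have h1 := key_identity G (fun _ => 1) I hanti
  simp only [one_mul, sub_self, zero_mul, Finset.sum_const_zero] at h1
  have h2 : ∑ x, ∑ y ∈ G.neighborFinset x, I x y
      = (∑ y ∈ G.neighborFinset a, I a y) + (∑ y ∈ G.neighborFinset b, I b y) :=
    sum_eq_pair _ a b hab hharm
  linarith

private lemma flow_lemma (G : SimpleGraph V) [DecidableRel G.Adj] (hconn : G.Connected)
    {p : ℝ} (hp : 1 < p) (c : V → V → ℝ)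
    (hc_sym : ∀ x y, c x y = c y x) (hc_pos : ∀ x y, G.Adj x y → 0 < c x y)
    (a b : V) (hab : a ≠ b) (h : V → ℝ)
    (hnc : ∃ x y, h x ≠ h y) (I : V → V → ℝ)
    (hI : ∀ x y, I x y = c x y * psi p (h y - h x))
    (hharm : ∀ x, x ≠ a → x ≠ b → ∑ y ∈ G.neighborFinset x, I x y = 0) :
    (h a - h b) * (∑ y ∈ G.neighborFinset a, I a y) < 0 := by
  have hanti : ∀ x y, I y x = - I x y := by
    intro x y
    rw [hI, hI, hc_sym y x, show h x - h y = -(h y - h x) by ring, psi_neg]; ring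
  have hkey := key_identity G h I hanti
  have hsum : ∑ x, h x * ∑ y ∈ G.neighborFinset x, I x y
      = h a * (∑ y ∈ G.neighborFinset a, I a y)
        + h b * (∑ y ∈ G.neighborFinset b, I b y) :=
    sum_eq_pair _ a b hab (fun x hxa hxb => by rw [hharm x hxa hxb, mul_zero])
  have hb' := total_div G a b hab I hanti hharm
  have hterm : ∀ x y, G.Adj x y → (h x - h y) * I x y ≤ 0 := by
    intro x y hadj
    rw [hI]
    have h1 := psi_sub_mul_nonneg hp (h y - h x) 0
    rw [psi_zero] at h1
    have h2 := hc_pos x y hadj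
    nlinarith [mul_nonneg h2.le h1]
  obtain ⟨x0, y0, hxy0⟩ := hnc
  obtain ⟨w⟩ := hconn.preconnected x0 y0
  obtain ⟨u, v, huv, hne⟩ := walk_exists_adj_ne G h w hxy0
  have hle : ∀ x, ∑ y ∈ G.neighborFinset x, (h x - h y) * I x y ≤ 0 := fun x =>
    Finset.sum_nonpos (fun y hy =>
      hterm x y (by simpa [SimpleGraph.mem_neighborFinset] using hy))
  have hvmem : v ∈ G.neighborFinset u := by
    simpa [SimpleGraph.mem_neighborFinset] using huv
  have hterm_lt : (h u - h v) * I u v < 0 := by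
    rw [hI]
    have h1 := psi_sub_mul_pos hp (show h v - h u ≠ (0:ℝ) from sub_ne_zero.mpr (Ne.symm hne))
    rw [psi_zero] at h1
    have h2 := hc_pos u v huv
    nlinarith [mul_pos h2 h1]
  have hu : ∑ y ∈ G.neighborFinset u, (h u - h y) * I u y < 0 := by
    have := Finset.sum_lt_sum
      (f := fun y => (h u - h y) * I u y) (g := fun _ => (0:ℝ))
      (fun y hy => hterm u y (by simpa [SimpleGraph.mem_neighborFinset] using hy))
      ⟨v, hvmem, hterm_lt⟩
    simpa using this
  have hneg : ∑ x, ∑ y ∈ G.neighborFinset x, (h x - h y) * I x y < 0 := by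
    have := Finset.sum_lt_sum
      (f := fun x => ∑ y ∈ G.neighborFinset x, (h x - h y) * I x y)
      (g := fun _ => (0:ℝ))
      (fun x _ => hle x) ⟨u, Finset.mem_univ u, hu⟩
    simpa using this
  rw [hsum, hb'] at hkey
  nlinarith [hkey, hneg]

private lemma equal_strength (G : SimpleGraph V) [DecidableRel G.Adj] (hconn : G.Connected)
    {p : ℝ} (hp : 1 < p) (c : V → V → ℝ)
    (hc_sym : ∀ x y, c x y = c y x) (hc_pos : ∀ x y, G.Adj x y → 0 < c x y)
    (a b : V) (hab : a ≠ b) (h₁ h₂ : V → ℝ) (I J : V → V → ℝ)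
    (hI : ∀ x y, I x y = c x y * psi p (h₁ y - h₁ x))
    (hJ : ∀ x y, J x y = c x y * psi p (h₂ y - h₂ x))
    (hharm₁ : ∀ x, x ≠ a → x ≠ b → ∑ y ∈ G.neighborFinset x, I x y = 0)
    (hharm₂ : ∀ x, x ≠ a → x ≠ b → ∑ y ∈ G.neighborFinset x, J x y = 0)
    (hstrength : ∑ y ∈ G.neighborFinset a, I a y = ∑ y ∈ G.neighborFinset a, J a y) :
    h₁ b - h₁ a = h₂ b - h₂ a := by
  have hantiI : ∀ x y, I y x = - I x y := by
    intro x y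
    rw [hI, hI, hc_sym y x, show h₁ x - h₁ y = -(h₁ y - h₁ x) by ring, psi_neg]; ring
  have hantiJ : ∀ x y, J y x = - J x y := by
    intro x y
    rw [hJ, hJ, hc_sym y x, show h₂ x - h₂ y = -(h₂ y - h₂ x) by ring, psi_neg]; ring
  set K : V → V → ℝ := fun x y => I x y - J x y with hK
  have hantiK : ∀ x y, K y x = - K x y := by
    intro x y; simp only [hK]; rw [hantiI, hantiJ]; ring
  have hdivK : ∀ x, ∑ y ∈ G.neighborFinset x, K x y
      = (∑ y ∈ G.neighborFinset x, I x y) - (∑ y ∈ G.neighborFinset x, J x y) := by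
    intro x; simp only [hK]; rw [Finset.sum_sub_distrib]
  have hbI := total_div G a b hab I hantiI hharm₁
  have hbJ := total_div G a b hab J hantiJ hharm₂
  have hdivK0 : ∀ x, ∑ y ∈ G.neighborFinset x, K x y = 0 := by
    intro x
    rw [hdivK]
    by_cases hxa : x = a
    · subst hxa; rw [hstrength]; ring
    by_cases hxb : x = b
    · subst hxb; rw [hbI, hbJ, hstrength]; ring
    · rw [hharm₁ x hxa hxb, hharm₂ x hxa hxb]; ring
  have hkey := key_identity G (fun x => h₁ x - h₂ x) K hantiK
  have hlhs : ∑ x, (h₁ x - h₂ x) * ∑ y ∈ G.neighborFinset x, K x y = 0 := by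
    refine Finset.sum_eq_zero fun x _ => ?_
    rw [hdivK0 x, mul_zero]
  rw [hlhs, mul_zero] at hkey
  -- each term is nonpositive
  have hterm : ∀ x y, G.Adj x y →
      ((h₁ x - h₂ x) - (h₁ y - h₂ y)) * K x y ≤ 0 := by
    intro x y hadj
    simp only [hK]
    rw [hI, hJ]
    have h1 := psi_sub_mul_nonneg hp (h₁ y - h₁ x) (h₂ y - h₂ x)
    have h2 := hc_pos x y hadj
    nlinarith [mul_nonneg h2.le h1]
  have hinner_le : ∀ x ∈ Finset.univ (α := V),
      ∑ y ∈ G.neighborFinset x, ((fun x => h₁ x - h₂ x) x - (fun x => h₁ x - h₂ x) y) * K x y ≤ 0 :=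
    fun x _ => Finset.sum_nonpos fun y hy =>
      hterm x y (by simpa [SimpleGraph.mem_neighborFinset] using hy)
  have hinner0 := (Finset.sum_eq_zero_iff_of_nonpos hinner_le).mp hkey.symm
  have hedge : ∀ u v, G.Adj u v → h₁ v - h₁ u = h₂ v - h₂ u := by
    intro u v huv
    by_contra hne
    have hvmem : v ∈ G.neighborFinset u := by
      simpa [SimpleGraph.mem_neighborFinset] using huv
    have h0 := (Finset.sum_eq_zero_iff_of_nonpos
        (fun y hy => hterm u y (by simpa [SimpleGraph.mem_neighborFinset] using hy))).mp
        (hinner0 u (Finset.mem_univ u)) v hvmem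
    have h1 := psi_sub_mul_pos hp hne
    have h2 := hc_pos u v huv
    have : ((h₁ u - h₂ u) - (h₁ v - h₂ v)) * K u v < 0 := by
      simp only [hK]; rw [hI, hJ]
      nlinarith [mul_pos h2 h1]
    rw [h0] at this
    exact lt_irrefl 0 this
  have hconst : ∀ u v, G.Adj u v → (h₁ u - h₂ u) = (h₁ v - h₂ v) := by
    intro u v huv
    have := hedge u v huv
    linarith
  obtain ⟨w⟩ := hconn.preconnected a b
  have := walk_const G (fun x => h₁ x - h₂ x) hconst w
  linarith

end Graph

/-- The p-effective resistance is well defined: for non-constant p-harmonic functions h₁, h₂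
with current flows I₁, I₂, the ratio |h(b)-h(a)|^{p-2}(h(b)-h(a))/‖I‖ is the same,
well defined (strength nonzero) and nonzero. -/
theorem effective_resistance_well_defined {V : Type*} [Fintype V] [DecidableEq V]
    (G : SimpleGraph V) [DecidableRel G.Adj] (hconn : G.Connected)
    (p : ℝ) (hp : 1 < p)
    (c : V → V → ℝ) (hc_sym : ∀ x y, c x y = c y x)
    (hc_pos : ∀ x y, G.Adj x y → 0 < c x y)
    (a b : V) (hab : a ≠ b)
    (h₁ h₂ : V → ℝ)
    (hharm₁ : ∀ x, x ≠ a → x ≠ b →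
      ∑ y ∈ G.neighborFinset x, c x y * |h₁ y - h₁ x| ^ (p - 2) * (h₁ y - h₁ x) = 0)
    (hharm₂ : ∀ x, x ≠ a → x ≠ b →
      ∑ y ∈ G.neighborFinset x, c x y * |h₂ y - h₂ x| ^ (p - 2) * (h₂ y - h₂ x) = 0)
    (hnc₁ : ∃ x y, h₁ x ≠ h₁ y) (hnc₂ : ∃ x y, h₂ x ≠ h₂ y)
    (I₁ I₂ : V → V → ℝ)
    (hI₁ : ∀ x y, I₁ x y = c x y * |h₁ y - h₁ x| ^ (p - 2) * (h₁ y - h₁ x))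
    (hI₂ : ∀ x y, I₂ x y = c x y * |h₂ y - h₂ x| ^ (p - 2) * (h₂ y - h₂ x)) :
    (∑ x ∈ G.neighborFinset a, I₁ a x ≠ 0) ∧
    (∑ x ∈ G.neighborFinset a, I₂ a x ≠ 0) ∧
    |h₁ b - h₁ a| ^ (p - 2) * (h₁ b - h₁ a) / (∑ x ∈ G.neighborFinset a, I₁ a x) =
      |h₂ b - h₂ a| ^ (p - 2) * (h₂ b - h₂ a) / (∑ x ∈ G.neighborFinset a, I₂ a x) ∧
    |h₁ b - h₁ a| ^ (p - 2) * (h₁ b - h₁ a) / (∑ x ∈ G.neighborFinset a, I₁ a x) ≠ 0 := by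
  -- restate the flow formulas via `psi`
  have hI₁' : ∀ x y, I₁ x y = c x y * psi p (h₁ y - h₁ x) := by
    intro x y; rw [hI₁]; simp only [psi]; ring
  have hI₂' : ∀ x y, I₂ x y = c x y * psi p (h₂ y - h₂ x) := by
    intro x y; rw [hI₂]; simp only [psi]; ring
  have hdiv₁ : ∀ x, x ≠ a → x ≠ b → ∑ y ∈ G.neighborFinset x, I₁ x y = 0 := by
    intro x hxa hxb
    simp only [hI₁]
    exact hharm₁ x hxa hxb
  have hdiv₂ : ∀ x, x ≠ a → x ≠ b → ∑ y ∈ G.neighborFinset x, I₂ x y = 0 := by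
    intro x hxa hxb
    simp only [hI₂]
    exact hharm₂ x hxa hxb
  set D₁ := ∑ x ∈ G.neighborFinset a, I₁ a x with hD₁
  set D₂ := ∑ x ∈ G.neighborFinset a, I₂ a x with hD₂
  have hlt₁ : (h₁ a - h₁ b) * D₁ < 0 :=
    flow_lemma G hconn hp c hc_sym hc_pos a b hab h₁ hnc₁ I₁ hI₁' hdiv₁
  have hlt₂ : (h₂ a - h₂ b) * D₂ < 0 :=
    flow_lemma G hconn hp c hc_sym hc_pos a b hab h₂ hnc₂ I₂ hI₂' hdiv₂
  have hD₁0 : D₁ ≠ 0 := by intro h; rw [h, mul_zero] at hlt₁; exact lt_irrefl 0 hlt₁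
  have hD₂0 : D₂ ≠ 0 := by intro h; rw [h, mul_zero] at hlt₂; exact lt_irrefl 0 hlt₂
  have hba₁ : h₁ b - h₁ a ≠ 0 := by
    intro h
    rw [show h₁ a - h₁ b = -(h₁ b - h₁ a) by ring, h] at hlt₁
    simp at hlt₁
  have hba₂ : h₂ b - h₂ a ≠ 0 := by
    intro h
    rw [show h₂ a - h₂ b = -(h₂ b - h₂ a) by ring, h] at hlt₂
    simp at hlt₂
  -- scaling: choose α with psi p α = D₁ / D₂
  obtain ⟨α, hα⟩ := psi_surj hp (D₁ / D₂)
  set h₂' : V → ℝ := fun x => α * h₂ x with hh₂'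
  set I₂' : V → V → ℝ := fun x y => psi p α * I₂ x y with hI₂''
  have hI₂'form : ∀ x y, I₂' x y = c x y * psi p (h₂' y - h₂' x) := by
    intro x y
    simp only [hI₂'', hh₂']
    rw [hI₂', show α * h₂ y - α * h₂ x = α * (h₂ y - h₂ x) by ring, psi_mul]
    ring
  have hdiv₂' : ∀ x, x ≠ a → x ≠ b → ∑ y ∈ G.neighborFinset x, I₂' x y = 0 := by
    intro x hxa hxb
    simp only [hI₂'']
    rw [← Finset.mul_sum, hdiv₂ x hxa hxb, mul_zero]
  have hstrength : ∑ y ∈ G.neighborFinset a, I₁ a y = ∑ y ∈ G.neighborFinset a, I₂' a y := by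
    simp only [hI₂'']
    rw [← Finset.mul_sum]
    rw [hα]
    rw [← hD₂, ← hD₁]
    field_simp
  have hEq : h₁ b - h₁ a = h₂' b - h₂' a :=
    equal_strength G hconn hp c hc_sym hc_pos a b hab h₁ h₂' I₁ I₂'
      hI₁' hI₂'form hdiv₁ hdiv₂' hstrength
  have hEq' : h₁ b - h₁ a = α * (h₂ b - h₂ a) := by
    rw [hEq]; simp only [hh₂']; ring
  have hpsiEq : psi p (h₁ b - h₁ a) = (D₁ / D₂) * psi p (h₂ b - h₂ a) := by
    rw [hEq', psi_mul, hα]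
  have hratio : psi p (h₁ b - h₁ a) / D₁ = psi p (h₂ b - h₂ a) / D₂ := by
    rw [hpsiEq]
    field_simp
  have hratio' : |h₁ b - h₁ a| ^ (p - 2) * (h₁ b - h₁ a) / D₁
      = |h₂ b - h₂ a| ^ (p - 2) * (h₂ b - h₂ a) / D₂ := by
    simpa only [psi] using hratio
  refine ⟨hD₁0, hD₂0, hratio', ?_⟩
  rw [show |h₁ b - h₁ a| ^ (p - 2) * (h₁ b - h₁ a) = psi p (h₁ b - h₁ a) from rfl]
  exact div_ne_zero (psi_ne_zero hp hba₁) hD₁0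
end

section
/- (Thomson's principle) Let G be a finite connected graph with positive conductances and p > 1. Then R_p(a,b) = [inf over unit flows θ from a to b of ∑_{e∈E} r_e^{1/(p-1)} |θ(e)|^{p/(p-1)}]^{p-1}, and the infimum is attained at a current flow. -/
/-!
With `q = p/(p-1)` and `φ_r(t) = |t|^(r-2) t`, the maps `φ_p` and `φ_q` are mutually inverse, so the
current flow `I = c φ_p(∇h)`, rescaled to a unit flow `θ₀`, satisfies `c^{-1/(p-1)} φ_q(θ₀) = ∇g`
for the rescaled potential `g = φ_q(K⁻¹) h`, where `K` is the strength of `I`; summation by parts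
gives `2 K (h b - h a) = ∑ c |∇h|^p > 0`, so `K ≠ 0`. The tangent-line inequality for the convex
function `|t|^q`, summed over the edges, bounds the energy of any unit flow `θ` below by that of
`θ₀` plus a multiple of `∑ ∇g · (θ - θ₀)`, and this sum vanishes by summation by parts because
`θ - θ₀` is divergence-free. The same summation by parts shows that the energy of `θ₀` is `g b - g a`,
whose `(p-1)`-th power is `φ_p(h b - h a) / K`.
-/

open Finset

/-- The signed power `φ_p(t) = sign t * |t|^(p-1)`, the derivative of `|t|^p / p`. -/
noncomputable def sgnPow (p t : ℝ) : ℝ := |t| ^ (p - 2) * t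

section SgnPow

variable {p q : ℝ}

lemma sgnPow_mul (p s t : ℝ) : sgnPow p (s * t) = sgnPow p s * sgnPow p t := by
  rw [sgnPow, sgnPow, sgnPow, abs_mul, Real.mul_rpow (abs_nonneg _) (abs_nonneg _)]
  ring

lemma sgnPow_neg (p t : ℝ) : sgnPow p (-t) = -sgnPow p t := by
  rw [sgnPow, sgnPow, abs_neg, mul_neg]

lemma sgnPow_of_nonneg (hp : p ≠ 1) {t : ℝ} (ht : 0 ≤ t) : sgnPow p t = t ^ (p - 1) := by
  rcases ht.eq_or_lt with rfl | ht
  · rw [sgnPow, mul_zero, Real.zero_rpow (sub_ne_zero.mpr hp)]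
  · rw [sgnPow, abs_of_pos ht, ← Real.rpow_add_one ht.ne']
    congr 1; ring

lemma abs_sgnPow (hp : p ≠ 1) (t : ℝ) : |sgnPow p t| = |t| ^ (p - 1) := by
  rw [sgnPow, abs_mul, abs_of_nonneg (Real.rpow_nonneg (abs_nonneg t) _)]
  simpa only [sgnPow, abs_abs] using sgnPow_of_nonneg hp (abs_nonneg t)

lemma sgnPow_mul_self (hp : p ≠ 0) (t : ℝ) : sgnPow p t * t = |t| ^ p := by
  rcases eq_or_ne t 0 with rfl | ht
  · rw [mul_zero, abs_zero, Real.zero_rpow hp]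
  · have ht' : |t| ≠ 0 := abs_ne_zero.mpr ht
    rw [sgnPow, mul_assoc, ← abs_mul_abs_self t, ← mul_assoc, ← Real.rpow_add_one ht',
      ← Real.rpow_add_one ht']
    congr 1; ring

lemma sgnPow_sgnPow (hpq : p.HolderConjugate q) (t : ℝ) : sgnPow q (sgnPow p t) = t := by
  rcases eq_or_ne t 0 with rfl | ht
  · simp [sgnPow]
  · change |sgnPow p t| ^ (q - 2) * sgnPow p t = t
    rw [abs_sgnPow hpq.lt.ne', sgnPow, ← mul_assoc, ← Real.rpow_mul (abs_nonneg t),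
      ← Real.rpow_add (abs_pos.mpr ht),
      show (p - 1) * (q - 2) + (p - 2) = 0 by linear_combination hpq.sub_one_mul_conj,
      Real.rpow_zero, one_mul]

lemma inv_rpow_mul_sgnPow_mul_sgnPow (hpq : p.HolderConjugate q) {c : ℝ} (hc : 0 < c)
    (u : ℝ) : c⁻¹ ^ ((1 : ℝ) / (p - 1)) * sgnPow q (c * sgnPow p u) = u := by
  have hexp : (1 : ℝ) / (p - 1) = q - 1 := by
    field_simp [hpq.sub_one_ne_zero]
    linear_combination -hpq.sub_one_mul_conj
  rw [sgnPow_mul, sgnPow_sgnPow hpq, sgnPow_of_nonneg hpq.symm.lt.ne' hc.le, hexp,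
    Real.inv_rpow hc.le, inv_mul_cancel_left₀ (Real.rpow_pos_of_pos hc _).ne']

/-- The tangent-line inequality for the convex function `|t| ^ q`. -/
lemma abs_rpow_add_mul_sgnPow_mul_sub_le (hq : 1 < q) (s t : ℝ) :
    |s| ^ q + q * (sgnPow q s * (t - s)) ≤ |t| ^ q := by
  have hqp := (Real.HolderConjugate.conjExponent hq).symm
  set p := Real.conjExponent q
  have hyoung := Real.young_inequality_of_nonneg (Real.rpow_nonneg (abs_nonneg s) (q - 1))
    (abs_nonneg t) hqp
  rw [← Real.rpow_mul (abs_nonneg s), hqp.symm.sub_one_mul_conj] at hyoung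
  have hcross : sgnPow q s * t ≤ |s| ^ (q - 1) * |t| :=
    (le_abs_self _).trans_eq (by rw [abs_mul, abs_sgnPow hq.ne'])
  have hq0 : 0 < q := by linarith
  calc |s| ^ q + q * (sgnPow q s * (t - s))
      = |s| ^ q + q * (sgnPow q s * t) - q * |s| ^ q := by
        rw [mul_sub, sgnPow_mul_self hq0.ne']; ring
    _ ≤ |s| ^ q + q * (|s| ^ q / p + |t| ^ q / q) - q * |s| ^ q := by gcongr; linarith
    _ = |t| ^ q := by
        rw [mul_add, mul_div_cancel₀ _ hq0.ne', mul_div_assoc', mul_div_right_comm,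
          hqp.symm.div_conj_eq_sub_one]
        ring

end SgnPow

namespace SimpleGraph

lemma Preconnected.apply_eq_of_forall_adj {V β : Type*} {G : SimpleGraph V}
    (hconn : G.Preconnected) {f : V → β} (hf : ∀ x y, G.Adj x y → f x = f y) (u v : V) :
    f u = f v := by
  obtain ⟨w⟩ := hconn u v
  induction w with
  | nil => rfl
  | cons hxy _ ih => exact (hf _ _ hxy).trans ih

variable {V : Type*} [Fintype V] (G : SimpleGraph V) [DecidableRel G.Adj]

lemma sum_sum_neighborFinset_swap {M : Type*} [AddCommMonoid M] (F : V → V → M) :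
    ∑ x, ∑ y ∈ G.neighborFinset x, F y x = ∑ x, ∑ y ∈ G.neighborFinset x, F x y :=
  Finset.sum_comm' fun x y => by simp [G.adj_comm]

def IsFlow (a b : V) (θ : V → V → ℝ) : Prop :=
  (∀ x y, θ x y = -θ y x) ∧ ∀ x, x ≠ a → x ≠ b → ∑ y ∈ G.neighborFinset x, θ x y = 0

variable {G}

lemma IsFlow.sub {a b : V} {θ θ' : V → V → ℝ} (hθ : G.IsFlow a b θ) (hθ' : G.IsFlow a b θ') :
    G.IsFlow a b (θ - θ') :=
  ⟨fun x y => by simp only [Pi.sub_apply, hθ.1 x y, hθ'.1 x y]; ring,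
    fun x hxa hxb => by simp only [Pi.sub_apply, sum_sub_distrib, hθ.2 x hxa hxb,
      hθ'.2 x hxa hxb, sub_zero]⟩

lemma IsFlow.const_mul {a b : V} {θ : V → V → ℝ} (hθ : G.IsFlow a b θ) (r : ℝ) :
    G.IsFlow a b fun x y => r * θ x y :=
  ⟨fun x y => show r * θ x y = -(r * θ y x) by rw [hθ.1 x y, mul_neg],
    fun x hxa hxb => by rw [← mul_sum, hθ.2 x hxa hxb, mul_zero]⟩

lemma sum_sum_neighborFinset_sub_mul {θ : V → V → ℝ} (hθ : ∀ x y, θ x y = -θ y x)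
    (f : V → ℝ) :
    ∑ x, ∑ y ∈ G.neighborFinset x, (f y - f x) * θ x y =
      -2 * ∑ x, f x * ∑ y ∈ G.neighborFinset x, θ x y := by
  have hswap : ∑ x, ∑ y ∈ G.neighborFinset x, f y * θ x y =
      -∑ x, ∑ y ∈ G.neighborFinset x, f x * θ x y := by
    rw [← G.sum_sum_neighborFinset_swap, ← sum_neg_distrib]
    refine sum_congr rfl fun x _ => ?_
    rw [← sum_neg_distrib]
    exact sum_congr rfl fun y _ => by rw [hθ y x, mul_neg]
  simp only [sub_mul, sum_sub_distrib, hswap, mul_sum, ← sum_neg_distrib]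
  simp only [← sum_sub_distrib]
  exact sum_congr rfl fun x _ => sum_congr rfl fun y _ => by ring

lemma IsFlow.sum_sum_neighborFinset_sub_mul {a b : V} (hab : a ≠ b) {θ : V → V → ℝ}
    (hθ : G.IsFlow a b θ) (f : V → ℝ) :
    ∑ x, ∑ y ∈ G.neighborFinset x, (f y - f x) * θ x y =
      2 * (f b - f a) * ∑ y ∈ G.neighborFinset a, θ a y := by
  have hsplit (f : V → ℝ) : ∑ x, f x * ∑ y ∈ G.neighborFinset x, θ x y =
      f a * ∑ y ∈ G.neighborFinset a, θ a y + f b * ∑ y ∈ G.neighborFinset b, θ b y :=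
    Fintype.sum_eq_add a b hab fun x hx => by rw [hθ.2 x hx.1 hx.2, mul_zero]
  have hconserved := G.sum_sum_neighborFinset_sub_mul hθ.1 fun _ => 1
  rw [hsplit fun _ => 1] at hconserved
  simp only [sub_self, zero_mul, sum_const_zero, one_mul] at hconserved
  rw [G.sum_sum_neighborFinset_sub_mul hθ.1, hsplit]
  linear_combination -f b * hconserved

lemma sum_sum_neighborFinset_mul_abs_sub_rpow_pos (hconn : G.Connected) {c : V → V → ℝ}
    (hc : ∀ x y, G.Adj x y → 0 < c x y) {p : ℝ} (hp : p ≠ 0) {h : V → ℝ}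
    (hnc : ∃ x y, h x ≠ h y) :
    0 < ∑ x, ∑ y ∈ G.neighborFinset x, c x y * |h y - h x| ^ p := by
  obtain ⟨u, v, huv⟩ := hnc
  have hnn (x : V) : ∀ y ∈ G.neighborFinset x, 0 ≤ c x y * |h y - h x| ^ p := fun y hy =>
    mul_nonneg (hc x y (G.mem_neighborFinset x y |>.mp hy)).le (by positivity)
  refine (sum_nonneg fun x _ => sum_nonneg (hnn x)).lt_of_ne fun h0 =>
    huv (hconn.preconnected.apply_eq_of_forall_adj (fun x y hxy => ?_) u v)
  have hterm := (sum_eq_zero_iff_of_nonneg (hnn x)).mp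
    ((sum_eq_zero_iff_of_nonneg fun x _ => sum_nonneg (hnn x)).mp h0.symm x (mem_univ x)) y
    ((G.mem_neighborFinset x y).mpr hxy)
  rw [mul_eq_zero, Real.rpow_eq_zero (abs_nonneg _) hp, abs_eq_zero, sub_eq_zero] at hterm
  exact (hterm.resolve_left (hc x y hxy).ne').symm

lemma IsFlow.sum_neighborFinset_ne_zero_of_eq_mul_sgnPow (hconn : G.Connected) {a b : V}
    (hab : a ≠ b) {c : V → V → ℝ} (hc : ∀ x y, G.Adj x y → 0 < c x y) {p : ℝ} (hp : p ≠ 0)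
    {h : V → ℝ} (hnc : ∃ x y, h x ≠ h y) {I : V → V → ℝ}
    (hI : ∀ x y, I x y = c x y * sgnPow p (h y - h x)) (hIflow : G.IsFlow a b I) :
    ∑ y ∈ G.neighborFinset a, I a y ≠ 0 := by
  intro hK
  have hdissipation := hIflow.sum_sum_neighborFinset_sub_mul hab h
  rw [hK, mul_zero] at hdissipation
  refine (G.sum_sum_neighborFinset_mul_abs_sub_rpow_pos hconn hc hp hnc).ne' (hdissipation ▸ ?_)
  refine sum_congr rfl fun x _ => sum_congr rfl fun y _ => ?_
  rw [hI, ← sgnPow_mul_self hp (h y - h x)]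
  ring

variable (G) in
/-- The factor `1 / 2` accounts for each edge being summed over from both endpoints. -/
noncomputable def flowEnergy (w : V → V → ℝ) (q : ℝ) (θ : V → V → ℝ) : ℝ :=
  (1 / 2) * ∑ x, ∑ y ∈ G.neighborFinset x, w x y * |θ x y| ^ q

lemma flowEnergy_nonneg {w : V → V → ℝ} (hw : ∀ x y, G.Adj x y → 0 ≤ w x y) (q : ℝ)
    (θ : V → V → ℝ) : 0 ≤ G.flowEnergy w q θ :=
  mul_nonneg (by norm_num) (sum_nonneg fun x _ => sum_nonneg fun y hy =>
    mul_nonneg (hw x y ((G.mem_neighborFinset x y).mp hy)) (by positivity))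

section Minimizer

variable {a b : V} {w : V → V → ℝ} {q : ℝ} {θ₀ : V → V → ℝ} {g : V → ℝ}

lemma flowEnergy_eq_of_mul_sgnPow_eq_sub (hab : a ≠ b) (hq : q ≠ 0) (hθ₀ : G.IsFlow a b θ₀)
    (hθ₀a : ∑ y ∈ G.neighborFinset a, θ₀ a y = 1)
    (hgrad : ∀ x y, G.Adj x y → w x y * sgnPow q (θ₀ x y) = g y - g x) :
    G.flowEnergy w q θ₀ = g b - g a := by
  have hedge (x : V) : ∀ y ∈ G.neighborFinset x, w x y * |θ₀ x y| ^ q = (g y - g x) * θ₀ x y :=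
    fun y hy => by
      rw [← hgrad x y ((G.mem_neighborFinset x y).mp hy), mul_assoc, sgnPow_mul_self hq]
  rw [flowEnergy, sum_congr rfl fun x _ => sum_congr rfl (hedge x),
    hθ₀.sum_sum_neighborFinset_sub_mul hab, hθ₀a]
  ring

lemma flowEnergy_le_of_mul_sgnPow_eq_sub (hab : a ≠ b) (hq : 1 < q)
    (hw : ∀ x y, G.Adj x y → 0 ≤ w x y) (hθ₀ : G.IsFlow a b θ₀)
    (hθ₀a : ∑ y ∈ G.neighborFinset a, θ₀ a y = 1)
    (hgrad : ∀ x y, G.Adj x y → w x y * sgnPow q (θ₀ x y) = g y - g x) {θ : V → V → ℝ}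
    (hθ : G.IsFlow a b θ) (hθa : ∑ y ∈ G.neighborFinset a, θ a y = 1) :
    G.flowEnergy w q θ₀ ≤ G.flowEnergy w q θ := by
  have horth : ∑ x, ∑ y ∈ G.neighborFinset x, (g y - g x) * (θ - θ₀) x y = 0 := by
    rw [(hθ.sub hθ₀).sum_sum_neighborFinset_sub_mul hab]
    simp only [Pi.sub_apply, sum_sub_distrib, hθa, hθ₀a, sub_self, mul_zero]
  have hedge (x : V) : ∀ y ∈ G.neighborFinset x,
      w x y * |θ₀ x y| ^ q + q * ((g y - g x) * (θ - θ₀) x y) ≤ w x y * |θ x y| ^ q :=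
    fun y hy => by
      have hxy := (G.mem_neighborFinset x y).mp hy
      calc w x y * |θ₀ x y| ^ q + q * ((g y - g x) * (θ - θ₀) x y)
          = w x y * (|θ₀ x y| ^ q + q * (sgnPow q (θ₀ x y) * (θ x y - θ₀ x y))) := by
            rw [← hgrad x y hxy, Pi.sub_apply, Pi.sub_apply]; ring
        _ ≤ w x y * |θ x y| ^ q :=
            mul_le_mul_of_nonneg_left (abs_rpow_add_mul_sgnPow_mul_sub_le hq _ _) (hw x y hxy)
  calc G.flowEnergy w q θ₀
      = (1 / 2) * ∑ x, ∑ y ∈ G.neighborFinset x,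
          (w x y * |θ₀ x y| ^ q + q * ((g y - g x) * (θ - θ₀) x y)) := by
        simp only [sum_add_distrib, ← mul_sum, horth, mul_zero, add_zero, flowEnergy]
    _ ≤ G.flowEnergy w q θ := by
        unfold flowEnergy
        gcongr with x _ y hy
        exact hedge x y hy

theorem isLeast_flowEnergy_of_mul_sgnPow_eq_sub (hab : a ≠ b) (hq : 1 < q)
    (hw : ∀ x y, G.Adj x y → 0 ≤ w x y) (hθ₀ : G.IsFlow a b θ₀)
    (hθ₀a : ∑ y ∈ G.neighborFinset a, θ₀ a y = 1)
    (hgrad : ∀ x y, G.Adj x y → w x y * sgnPow q (θ₀ x y) = g y - g x) :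
    IsLeast {E | ∃ θ : V → V → ℝ, (∀ x y, θ x y = -θ y x) ∧
      (∀ x, x ≠ a → x ≠ b → ∑ y ∈ G.neighborFinset x, θ x y = 0) ∧
      ∑ y ∈ G.neighborFinset a, θ a y = 1 ∧ E = G.flowEnergy w q θ} (g b - g a) := by
  have hθ₀_energy := flowEnergy_eq_of_mul_sgnPow_eq_sub hab (by linarith) hθ₀ hθ₀a hgrad
  refine ⟨⟨θ₀, hθ₀.1, hθ₀.2, hθ₀a, hθ₀_energy.symm⟩, ?_⟩
  rintro E ⟨θ, hanti, hcons, hθa, rfl⟩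
  exact hθ₀_energy ▸ flowEnergy_le_of_mul_sgnPow_eq_sub hab hq hw hθ₀ hθ₀a hgrad ⟨hanti, hcons⟩ hθa

end Minimizer

end SimpleGraph

theorem thomson_principle_general {V : Type*} [Fintype V]
    (G : SimpleGraph V) [DecidableRel G.Adj] (hconn : G.Connected)
    (p : ℝ) (hp : 1 < p)
    (c : V → V → ℝ) (hc_sym : ∀ x y, c x y = c y x)
    (hc_pos : ∀ x y, G.Adj x y → 0 < c x y)
    (a b : V) (hab : a ≠ b)
    (h : V → ℝ)
    (hharm : ∀ x, x ≠ a → x ≠ b →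
      ∑ y ∈ G.neighborFinset x, c x y * |h y - h x| ^ (p - 2) * (h y - h x) = 0)
    (hnc : ∃ x y, h x ≠ h y)
    (I : V → V → ℝ)
    (hI : ∀ x y, I x y = c x y * |h y - h x| ^ (p - 2) * (h y - h x))
    (S : Set ℝ)
    (hS : S = {E : ℝ | ∃ θ : V → V → ℝ,
      (∀ x y, θ x y = -θ y x) ∧
      (∀ x, x ≠ a → x ≠ b → ∑ y ∈ G.neighborFinset x, θ x y = 0) ∧
      (∑ x ∈ G.neighborFinset a, θ a x = 1) ∧
      E = (1 / 2) * ∑ x, ∑ y ∈ G.neighborFinset x,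
            (c x y)⁻¹ ^ ((1 : ℝ) / (p - 1)) * |θ x y| ^ (p / (p - 1))}) :
    |h b - h a| ^ (p - 2) * (h b - h a) / (∑ x ∈ G.neighborFinset a, I a x) =
        sInf S ^ (p - 1) ∧
    (∃ θ : V → V → ℝ,
      (∀ x y, θ x y = -θ y x) ∧
      (∀ x, x ≠ a → x ≠ b → ∑ y ∈ G.neighborFinset x, θ x y = 0) ∧
      (∑ x ∈ G.neighborFinset a, θ a x = 1) ∧
      (1 / 2) * ∑ x, ∑ y ∈ G.neighborFinset x,
          (c x y)⁻¹ ^ ((1 : ℝ) / (p - 1)) * |θ x y| ^ (p / (p - 1)) = sInf S ∧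
      (∃ g : V → ℝ,
        (∀ x, x ≠ a → x ≠ b →
          ∑ y ∈ G.neighborFinset x, c x y * |g y - g x| ^ (p - 2) * (g y - g x) = 0) ∧
        ∀ x y, G.Adj x y → θ x y = c x y * |g y - g x| ^ (p - 2) * (g y - g x))) := by
  set q := p / (p - 1)
  have hpq : p.HolderConjugate q := Real.HolderConjugate.conjExponent hp
  have hI' (x y : V) : I x y = c x y * sgnPow p (h y - h x) := (hI x y).trans (mul_assoc _ _ _)
  have hI_flow : G.IsFlow a b I := by
    refine ⟨fun x y => ?_, fun x hxa hxb => by simpa only [hI] using hharm x hxa hxb⟩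
    rw [hI', hI', hc_sym, ← neg_sub (h x) (h y), sgnPow_neg, mul_neg]
  set K := ∑ y ∈ G.neighborFinset a, I a y
  have hK : K ≠ 0 := hI_flow.sum_neighborFinset_ne_zero_of_eq_mul_sgnPow hconn hab hc_pos
    hpq.ne_zero hnc hI'
  set g : V → ℝ := fun x => sgnPow q K⁻¹ * h x
  set θ₀ : V → V → ℝ := fun x y => c x y * sgnPow p (g y - g x)
  have hθ₀I : θ₀ = fun x y => K⁻¹ * I x y := by
    funext x y
    rw [hI', ← sgnPow_sgnPow hpq.symm K⁻¹, ← mul_left_comm, ← sgnPow_mul, mul_sub]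
  have hθ₀ : G.IsFlow a b θ₀ := hθ₀I ▸ hI_flow.const_mul K⁻¹
  have hθ₀a : ∑ y ∈ G.neighborFinset a, θ₀ a y = 1 := by
    rw [hθ₀I, ← mul_sum, inv_mul_cancel₀ hK]
  have hw (x y : V) (hxy : G.Adj x y) : 0 ≤ (c x y)⁻¹ ^ ((1 : ℝ) / (p - 1)) :=
    Real.rpow_nonneg (inv_nonneg.mpr (hc_pos x y hxy).le) _
  have hgrad (x y : V) (hxy : G.Adj x y) :
      (c x y)⁻¹ ^ ((1 : ℝ) / (p - 1)) * sgnPow q (θ₀ x y) = g y - g x :=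
    inv_rpow_mul_sgnPow_mul_sgnPow hpq (hc_pos x y hxy) _
  have hθ₀_energy := G.flowEnergy_eq_of_mul_sgnPow_eq_sub hab hpq.symm.ne_zero hθ₀ hθ₀a hgrad
  have hinf : sInf S = g b - g a := by
    subst hS
    exact (G.isLeast_flowEnergy_of_mul_sgnPow_eq_sub hab hpq.symm.lt hw hθ₀ hθ₀a hgrad).csInf_eq
  refine ⟨?_, θ₀, hθ₀.1, hθ₀.2, hθ₀a, hθ₀_energy.trans hinf.symm, g,
    fun x hxa hxb => (sum_congr rfl fun y _ => mul_assoc _ _ _).trans (hθ₀.2 x hxa hxb),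
    fun x y _ => (mul_assoc _ _ _).symm⟩
  rw [hinf, ← sgnPow_of_nonneg hpq.lt.ne' (hθ₀_energy ▸ G.flowEnergy_nonneg hw _ θ₀), ← mul_sub,
    sgnPow_mul, sgnPow_sgnPow hpq.symm, inv_mul_eq_div]
  rfl

/-- Thomson's principle: the p-effective resistance equals the (p-1)-th power of the
infimum of the energy over unit flows from a to b, and the infimum is attained at a
current flow. -/
theorem thomson_principle {V : Type*} [Fintype V] [DecidableEq V]
    (G : SimpleGraph V) [DecidableRel G.Adj] (hconn : G.Connected)
    (p : ℝ) (hp : 1 < p)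
    (c : V → V → ℝ) (hc_sym : ∀ x y, c x y = c y x)
    (hc_pos : ∀ x y, G.Adj x y → 0 < c x y)
    (a b : V) (hab : a ≠ b)
    (h : V → ℝ)
    (hharm : ∀ x, x ≠ a → x ≠ b →
      ∑ y ∈ G.neighborFinset x, c x y * |h y - h x| ^ (p - 2) * (h y - h x) = 0)
    (hnc : ∃ x y, h x ≠ h y)
    (I : V → V → ℝ)
    (hI : ∀ x y, I x y = c x y * |h y - h x| ^ (p - 2) * (h y - h x))
    (S : Set ℝ)
    (hS : S = {E : ℝ | ∃ θ : V → V → ℝ,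
      (∀ x y, θ x y = -θ y x) ∧
      (∀ x, x ≠ a → x ≠ b → ∑ y ∈ G.neighborFinset x, θ x y = 0) ∧
      (∑ x ∈ G.neighborFinset a, θ a x = 1) ∧
      E = (1 / 2) * ∑ x, ∑ y ∈ G.neighborFinset x,
            (c x y)⁻¹ ^ ((1 : ℝ) / (p - 1)) * |θ x y| ^ (p / (p - 1))}) :
    |h b - h a| ^ (p - 2) * (h b - h a) / (∑ x ∈ G.neighborFinset a, I a x) =
        sInf S ^ (p - 1) ∧
    (∃ θ : V → V → ℝ,
      (∀ x y, θ x y = -θ y x) ∧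
      (∀ x, x ≠ a → x ≠ b → ∑ y ∈ G.neighborFinset x, θ x y = 0) ∧
      (∑ x ∈ G.neighborFinset a, θ a x = 1) ∧
      (1 / 2) * ∑ x, ∑ y ∈ G.neighborFinset x,
          (c x y)⁻¹ ^ ((1 : ℝ) / (p - 1)) * |θ x y| ^ (p / (p - 1)) = sInf S ∧
      (∃ g : V → ℝ,
        (∀ x, x ≠ a → x ≠ b →
          ∑ y ∈ G.neighborFinset x, c x y * |g y - g x| ^ (p - 2) * (g y - g x) = 0) ∧
        ∀ x y, G.Adj x y → θ x y = c x y * |g y - g x| ^ (p - 2) * (g y - g x))) :=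
  thomson_principle_general G hconn p hp c hc_sym hc_pos a b hab h hharm hnc I hI S hS
end

section
/- Let θ be a flow from a to b on a finite connected graph, p>1, that minimizes the energy ℰ(θ) = ∑_{e∈E} r_e^{1/(p-1)}|θ(e)|^{p/(p-1)} among all unit flows. Then θ satisfies the cycle law: along every cycle e_1,...,e_n, ∑_{i=1}^n r_{e_i}^{1/(p-1)} θ(e_i)/|θ(e_i)|^{(p-2)/(p-1)} = 0. -/
/-!
Perturb the minimiser θ by ε χ, where χ is the unit current around the cycle. Since χ is
antisymmetric and divergence-free, θ + ε χ is again a unit flow, so ε = 0 is a minimum of the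
energy along this line. With q = p/(p-1) > 1 the map t ↦ |t|^q is differentiable with
derivative q |t|^(q-2) t, so the first variation ∑_e r_e^{1/(p-1)} θ(e) |θ(e)|^(q-2) χ(e)
vanishes; pairing with χ reduces it to twice the cycle sum, as q - 2 = -(p-2)/(p-1).
-/

open Finset

theorem Fin.sum_castSucc_sub_succ {M : Type*} [AddCommGroup M] {n : ℕ} (f : Fin (n + 1) → M) :
    ∑ i : Fin n, (f i.castSucc - f i.succ) = f 0 - f (Fin.last n) := by
  rw [sum_sub_distrib, eq_sub_of_add_eq (Fin.sum_univ_castSucc f).symm,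
    eq_sub_of_add_eq' (Fin.sum_univ_succ f).symm]
  abel

theorem div_abs_rpow_eq_mul_abs_rpow_neg (t s : ℝ) : t / |t| ^ s = t * |t| ^ (-s) := by
  rw [Real.rpow_neg (abs_nonneg t), div_eq_mul_inv]

theorem hasDerivAt_abs_add_mul_rpow (t s : ℝ) {q : ℝ} (hq : 1 < q) :
    HasDerivAt (fun ε : ℝ => |t + ε * s| ^ q) (q * |t| ^ (q - 2) * t * s) 0 := by
  have hline : HasDerivAt (fun ε : ℝ => t + ε * s) s 0 := by
    simpa using ((hasDerivAt_id (0 : ℝ)).mul_const s).const_add t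
  simpa [Function.comp_def] using (hasDerivAt_abs_rpow (t + 0 * s) hq).comp 0 hline

namespace SimpleGraph

variable {V : Type*}

section CycleFlow

variable [DecidableEq V] {n : ℕ} (xs : Fin (n + 1) → V)

def cycleFlow (x y : V) : ℝ :=
  ∑ i : Fin n, ((if x = xs i.castSucc ∧ y = xs i.succ then 1 else 0) -
    (if x = xs i.succ ∧ y = xs i.castSucc then 1 else 0))

theorem cycleFlow_antisymm (x y : V) : cycleFlow xs x y = -cycleFlow xs y x := by
  simp only [cycleFlow, ← sum_neg_distrib, neg_sub, and_comm]

variable [Fintype V] {G : SimpleGraph V} [DecidableRel G.Adj] {xs}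

theorem sum_neighborFinset_ite_and_eq {u v : V} (h : G.Adj u v) (x : V) :
    ∑ y ∈ G.neighborFinset x, (if x = u ∧ y = v then (1 : ℝ) else 0) = if x = u then 1 else 0 := by
  by_cases hx : x = u
  · subst hx
    simp [h]
  · simp [hx]

theorem sum_sum_neighborFinset_ite_eq (f : V → V → ℝ) {u v : V} (h : G.Adj u v) :
    ∑ x, ∑ y ∈ G.neighborFinset x, (if x = u ∧ y = v then f x y else 0) = f u v := by
  simp [ite_and, h]

theorem sum_neighborFinset_cycleFlow (hadj : ∀ i : Fin n, G.Adj (xs i.castSucc) (xs i.succ))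
    (hclosed : xs (Fin.last n) = xs 0) (x : V) :
    ∑ y ∈ G.neighborFinset x, cycleFlow xs x y = 0 := by
  have hterm : ∀ i : Fin n, ∑ y ∈ G.neighborFinset x,
      ((if x = xs i.castSucc ∧ y = xs i.succ then (1 : ℝ) else 0) -
        (if x = xs i.succ ∧ y = xs i.castSucc then 1 else 0)) =
      (if x = xs i.castSucc then 1 else 0) - (if x = xs i.succ then 1 else 0) := by
    intro i
    rw [sum_sub_distrib, sum_neighborFinset_ite_and_eq (hadj i),
      sum_neighborFinset_ite_and_eq (hadj i).symm]
  simp only [cycleFlow]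
  rw [sum_comm, sum_congr rfl fun i _ => hterm i,
    Fin.sum_castSucc_sub_succ fun j => if x = xs j then (1 : ℝ) else 0, hclosed, sub_self]

theorem sum_sum_mul_cycleFlow (hadj : ∀ i : Fin n, G.Adj (xs i.castSucc) (xs i.succ))
    (g : V → V → ℝ) :
    ∑ x, ∑ y ∈ G.neighborFinset x, g x y * cycleFlow xs x y =
      ∑ i : Fin n, (g (xs i.castSucc) (xs i.succ) - g (xs i.succ) (xs i.castSucc)) := by
  calc ∑ x, ∑ y ∈ G.neighborFinset x, g x y * cycleFlow xs x y
      = ∑ x, ∑ y ∈ G.neighborFinset x, ∑ i : Fin n,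
          ((if x = xs i.castSucc ∧ y = xs i.succ then g x y else 0) -
            (if x = xs i.succ ∧ y = xs i.castSucc then g x y else 0)) := by
        simp only [cycleFlow, mul_sum, mul_sub, mul_ite, mul_one, mul_zero]
    _ = ∑ i : Fin n, ∑ x, ∑ y ∈ G.neighborFinset x,
          ((if x = xs i.castSucc ∧ y = xs i.succ then g x y else 0) -
            (if x = xs i.succ ∧ y = xs i.castSucc then g x y else 0)) :=
        (sum_congr rfl fun x _ => sum_comm).trans sum_comm
    _ = _ := sum_congr rfl fun i _ => by
        simp only [sum_sub_distrib, sum_sum_neighborFinset_ite_eq g (hadj i),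
          sum_sum_neighborFinset_ite_eq g (hadj i).symm]

theorem sum_sum_mul_cycleFlow_of_antisymm
    (hadj : ∀ i : Fin n, G.Adj (xs i.castSucc) (xs i.succ)) {g : V → V → ℝ}
    (hg : ∀ x y, g x y = -g y x) :
    ∑ x, ∑ y ∈ G.neighborFinset x, g x y * cycleFlow xs x y =
      2 * ∑ i : Fin n, g (xs i.castSucc) (xs i.succ) := by
  rw [sum_sum_mul_cycleFlow hadj, mul_sum]
  exact sum_congr rfl fun i _ => by rw [hg (xs i.succ)]; ring

end CycleFlow

variable [Fintype V] (G : SimpleGraph V) [DecidableRel G.Adj]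

structure IsUnitFlow (a b : V) (η : V → V → ℝ) : Prop where
  antisymm : ∀ x y, η x y = -η y x
  node : ∀ x, x ≠ a → x ≠ b → ∑ y ∈ G.neighborFinset x, η x y = 0
  unit : ∑ x ∈ G.neighborFinset a, η a x = 1

theorem IsUnitFlow.add_mul {a b : V} {θ χ : V → V → ℝ} (hθ : G.IsUnitFlow a b θ)
    (hχ : ∀ x y, χ x y = -χ y x) (hdiv : ∀ x, ∑ y ∈ G.neighborFinset x, χ x y = 0) (ε : ℝ) :
    G.IsUnitFlow a b (fun x y => θ x y + ε * χ x y) where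
  antisymm x y := by rw [hθ.antisymm x y, hχ x y]; ring
  node x hxa hxb := by rw [sum_add_distrib, hθ.node x hxa hxb, ← mul_sum, hdiv x]; ring
  unit := by rw [sum_add_distrib, hθ.unit, ← mul_sum, hdiv a]; ring

noncomputable def energy (c : V → V → ℝ) (q : ℝ) (η : V → V → ℝ) : ℝ :=
  ∑ x, ∑ y ∈ G.neighborFinset x, c x y * |η x y| ^ q

theorem sum_sum_mul_eq_zero_of_energy_le {c : V → V → ℝ} {q : ℝ} (hq : 1 < q)
    {θ χ : V → V → ℝ}
    (hmin : ∀ ε : ℝ, G.energy c q θ ≤ G.energy c q (fun x y => θ x y + ε * χ x y)) :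
    ∑ x, ∑ y ∈ G.neighborFinset x, c x y * (θ x y * |θ x y| ^ (q - 2)) * χ x y = 0 := by
  have hderiv : HasDerivAt (fun ε : ℝ => G.energy c q (fun x y => θ x y + ε * χ x y))
      (q * ∑ x, ∑ y ∈ G.neighborFinset x, c x y * (θ x y * |θ x y| ^ (q - 2)) * χ x y) 0 := by
    simp only [energy, mul_sum]
    refine HasDerivAt.fun_sum fun x _ => HasDerivAt.fun_sum fun y _ => ?_
    exact ((hasDerivAt_abs_add_mul_rpow (θ x y) (χ x y) hq).const_mul (c x y)).congr_deriv
      (by ring)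
  have hlocalMin : IsLocalMin (fun ε : ℝ => G.energy c q (fun x y => θ x y + ε * χ x y)) 0 :=
    Filter.Eventually.of_forall fun ε => by simpa using hmin ε
  exact (mul_eq_zero.mp (hlocalMin.hasDerivAt_eq_zero hderiv)).resolve_left (by positivity)

end SimpleGraph

open SimpleGraph in
theorem energy_minimizer_satisfies_cycle_law_general {V : Type*} [Fintype V]
    (G : SimpleGraph V) [DecidableRel G.Adj]
    (p : ℝ) (hp : 1 < p)
    (r : V → V → ℝ) (hr_sym : ∀ x y, r x y = r y x)
    (a b : V)
    (θ : V → V → ℝ)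
    (hanti : ∀ x y, θ x y = -θ y x)
    (hnode : ∀ x, x ≠ a → x ≠ b → ∑ y ∈ G.neighborFinset x, θ x y = 0)
    (hunit : ∑ x ∈ G.neighborFinset a, θ a x = 1)
    (hmin : ∀ η : V → V → ℝ,
      (∀ x y, η x y = -η y x) →
      (∀ x, x ≠ a → x ≠ b → ∑ y ∈ G.neighborFinset x, η x y = 0) →
      (∑ x ∈ G.neighborFinset a, η a x = 1) →
      (1 / 2) * ∑ x, ∑ y ∈ G.neighborFinset x,
          (r x y) ^ ((1 : ℝ) / (p - 1)) * |θ x y| ^ (p / (p - 1)) ≤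
        (1 / 2) * ∑ x, ∑ y ∈ G.neighborFinset x,
          (r x y) ^ ((1 : ℝ) / (p - 1)) * |η x y| ^ (p / (p - 1))) :
    ∀ (n : ℕ) (xs : Fin (n + 1) → V),
      (∀ i : Fin n, G.Adj (xs i.castSucc) (xs i.succ)) →
      xs (Fin.last n) = xs 0 →
      ∑ i : Fin n, (r (xs i.castSucc) (xs i.succ)) ^ ((1 : ℝ) / (p - 1)) *
        (θ (xs i.castSucc) (xs i.succ) /
          |θ (xs i.castSucc) (xs i.succ)| ^ ((p - 2) / (p - 1))) = 0 := by
  classical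
  intro n xs hadj hclosed
  have hq : 1 < p / (p - 1) := (one_lt_div (by linarith)).mpr (by linarith)
  have hθ : G.IsUnitFlow a b θ := ⟨hanti, hnode, hunit⟩
  have hstationary := G.sum_sum_mul_eq_zero_of_energy_le
    (c := fun x y => r x y ^ ((1 : ℝ) / (p - 1))) hq (χ := cycleFlow xs) fun ε =>
      have hη := hθ.add_mul G (cycleFlow_antisymm xs) (sum_neighborFinset_cycleFlow hadj hclosed) ε
      le_of_mul_le_mul_left (hmin _ hη.antisymm hη.node hη.unit) one_half_pos
  rw [sum_sum_mul_cycleFlow_of_antisymm hadj fun x y => by rw [hr_sym x, hanti x, abs_neg]; ring]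
    at hstationary
  have hexp : p / (p - 1) - 2 = -((p - 2) / (p - 1)) := by
    field_simp [(by linarith : p - 1 ≠ 0)]
    ring
  simpa [div_abs_rpow_eq_mul_abs_rpow_neg, hexp] using hstationary

/-- A unit flow minimizing the energy ∑_e r_e^{1/(p-1)}|θ(e)|^{p/(p-1)} satisfies the
cycle law. -/
theorem energy_minimizer_satisfies_cycle_law {V : Type*} [Fintype V] [DecidableEq V]
    (G : SimpleGraph V) [DecidableRel G.Adj] (hconn : G.Connected)
    (p : ℝ) (hp : 1 < p)
    (r : V → V → ℝ) (hr_sym : ∀ x y, r x y = r y x)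
    (hr_pos : ∀ x y, G.Adj x y → 0 < r x y)
    (a b : V) (hab : a ≠ b)
    (θ : V → V → ℝ)
    (hanti : ∀ x y, θ x y = -θ y x)
    (hnode : ∀ x, x ≠ a → x ≠ b → ∑ y ∈ G.neighborFinset x, θ x y = 0)
    (hunit : ∑ x ∈ G.neighborFinset a, θ a x = 1)
    (hmin : ∀ η : V → V → ℝ,
      (∀ x y, η x y = -η y x) →
      (∀ x, x ≠ a → x ≠ b → ∑ y ∈ G.neighborFinset x, η x y = 0) →
      (∑ x ∈ G.neighborFinset a, η a x = 1) →
      (1 / 2) * ∑ x, ∑ y ∈ G.neighborFinset x,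
          (r x y) ^ ((1 : ℝ) / (p - 1)) * |θ x y| ^ (p / (p - 1)) ≤
        (1 / 2) * ∑ x, ∑ y ∈ G.neighborFinset x,
          (r x y) ^ ((1 : ℝ) / (p - 1)) * |η x y| ^ (p / (p - 1))) :
    ∀ (n : ℕ) (xs : Fin (n + 1) → V),
      (∀ i : Fin n, G.Adj (xs i.castSucc) (xs i.succ)) →
      xs (Fin.last n) = xs 0 →
      ∑ i : Fin n, (r (xs i.castSucc) (xs i.succ)) ^ ((1 : ℝ) / (p - 1)) *
        (θ (xs i.castSucc) (xs i.succ) /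
          |θ (xs i.castSucc) (xs i.succ)| ^ ((p - 2) / (p - 1))) = 0 :=
  energy_minimizer_satisfies_cycle_law_general G p hp r hr_sym a b θ hanti hnode hunit hmin
end

section
/- For a finite graph G with resistances r_e>0 and disjoint vertex sets A, B, the 1-capacity is the limit of the (1+ε)-capacities: lim_{ε→0+} Cap^{1+ε}(A;B) = Cap^1(A;B), where Cap^p(A;B) = inf{∑_{⟨x,y⟩∈E} r_{xy}|f(x)-f(y)|^p : f=0 on A, f≥1 on B, 0≤f≤1}. -/
open Filter

private lemma cap_key_ineq {d ε : ℝ} (hd0 : 0 ≤ d) (hd1 : d ≤ 1) (hε : 0 < ε) :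
    d ≤ d ^ (1 + ε) + ε := by
  rcases eq_or_lt_of_le hd0 with h | h
  · rw [← h, Real.zero_rpow (by positivity)]; linarith
  · have hlog : 1 - 1/d ≤ Real.log d := by
      have h2 := Real.log_le_sub_one_of_pos (x := 1/d) (by positivity)
      rw [Real.log_div one_ne_zero (ne_of_gt h), Real.log_one] at h2
      linarith
    have h1 : d - 1 ≤ d * Real.log d := by
      have h3 := mul_le_mul_of_nonneg_left hlog (le_of_lt h)
      have hd' : d * (1 - 1/d) = d - 1 := by field_simp
      linarith
    have hexp : 1 + ε * Real.log d ≤ d ^ ε := by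
      rw [Real.rpow_def_of_pos h]
      have h4 := Real.add_one_le_exp (Real.log d * ε)
      linarith [h4, mul_comm ε (Real.log d)]
    have hsplit : d ^ (1 + ε) = d * d ^ ε := by
      rw [Real.rpow_add h, Real.rpow_one]
    nlinarith [mul_le_mul_of_nonneg_left hexp (le_of_lt h), hε.le, h1]

private lemma cap_key_ineq2 {d ε : ℝ} (hd0 : 0 ≤ d) (hd1 : d ≤ 1) (hε : 0 < ε) :
    d ^ (1 + ε) ≤ d := by
  rcases eq_or_lt_of_le hd0 with h | h
  · rw [← h, Real.zero_rpow (by positivity)]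
  · calc d ^ (1 + ε) ≤ d ^ (1:ℝ) :=
        Real.rpow_le_rpow_of_exponent_ge h hd1 (by linarith)
      _ = d := Real.rpow_one d

/-- The 1-capacity is the limit of the (1+ε)-capacities as ε → 0⁺. -/
theorem capacity_continuity_at_one {V : Type*} [Fintype V] [DecidableEq V]
    (G : SimpleGraph V) [DecidableRel G.Adj] (hconn : G.Connected)
    (r : V → V → ℝ) (hr_sym : ∀ x y, r x y = r y x)
    (hr_pos : ∀ x y, G.Adj x y → 0 < r x y)
    (A B : Finset V) (hA : A.Nonempty) (hB : B.Nonempty) (hAB : Disjoint A B)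
    (Cap : ℝ → ℝ)
    (hCap : ∀ p : ℝ, Cap p = sInf {E : ℝ | ∃ f : V → ℝ,
        (∀ x ∈ A, f x = 0) ∧ (∀ x ∈ B, 1 ≤ f x) ∧ (∀ x, 0 ≤ f x ∧ f x ≤ 1) ∧
        E = (1 / 2) * ∑ x, ∑ y ∈ G.neighborFinset x, r x y * |f x - f y| ^ p}) :
    Tendsto (fun ε : ℝ => Cap (1 + ε)) (nhdsWithin 0 (Set.Ioi 0)) (nhds (Cap 1)) := by
  set S : ℝ → Set ℝ := fun p => {E : ℝ | ∃ f : V → ℝ,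
      (∀ x ∈ A, f x = 0) ∧ (∀ x ∈ B, 1 ≤ f x) ∧ (∀ x, 0 ≤ f x ∧ f x ≤ 1) ∧
      E = (1 / 2) * ∑ x, ∑ y ∈ G.neighborFinset x, r x y * |f x - f y| ^ p} with hS
  -- feasible function
  have hfeas : ∀ p : ℝ, (S p).Nonempty := by
    intro p
    refine ⟨_, fun x => if x ∈ B then (1:ℝ) else 0, ?_, ?_, ?_, rfl⟩
    · intro x hx
      simp [Finset.disjoint_left.mp hAB hx]
    · intro x hx; simp [hx]
    · intro x; dsimp only; split_ifs <;> norm_num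
  have hrE : ∀ x y, y ∈ G.neighborFinset x → 0 ≤ r x y := by
    intro x y hy
    exact (hr_pos x y (by simpa using hy)).le
  have hbdd : ∀ p : ℝ, BddBelow (S p) := by
    intro p
    refine ⟨0, fun E hE => ?_⟩
    obtain ⟨f, _, _, hf01, rfl⟩ := hE
    have : (0:ℝ) ≤ ∑ x, ∑ y ∈ G.neighborFinset x, r x y * |f x - f y| ^ p := by
      apply Finset.sum_nonneg; intro x _
      apply Finset.sum_nonneg; intro y hy
      exact mul_nonneg (hrE x y hy) (Real.rpow_nonneg (abs_nonneg _) p)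
    linarith
  set C : ℝ := (1 / 2) * ∑ x, ∑ y ∈ G.neighborFinset x, r x y with hC
  have hC0 : 0 ≤ C := by
    rw [hC]
    have : (0:ℝ) ≤ ∑ x, ∑ y ∈ G.neighborFinset x, r x y := by
      apply Finset.sum_nonneg; intro x _
      exact Finset.sum_nonneg fun y hy => hrE x y hy
    linarith
  -- upper bound
  have hupper : ∀ ε : ℝ, 0 < ε → Cap (1 + ε) ≤ Cap 1 := by
    intro ε hε
    rw [hCap, hCap]
    apply le_csInf (hfeas 1)
    rintro E ⟨f, hfA, hfB, hf01, rfl⟩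
    have hmem : ((1 / 2) * ∑ x, ∑ y ∈ G.neighborFinset x,
        r x y * |f x - f y| ^ (1 + ε) : ℝ) ∈ S (1 + ε) := ⟨f, hfA, hfB, hf01, rfl⟩
    refine le_trans (csInf_le (hbdd _) hmem) ?_
    have hterm : ∀ x y, y ∈ G.neighborFinset x →
        r x y * |f x - f y| ^ (1 + ε) ≤ r x y * |f x - f y| ^ (1:ℝ) := by
      intro x y hy
      apply mul_le_mul_of_nonneg_left _ (hrE x y hy)
      have hd1 : |f x - f y| ≤ 1 := by
        rcases hf01 x with ⟨h1, h2⟩; rcases hf01 y with ⟨h3, h4⟩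
        rw [abs_le]; constructor <;> linarith
      rw [Real.rpow_one]
      exact cap_key_ineq2 (abs_nonneg _) hd1 hε
    have := Finset.sum_le_sum (fun x (_ : x ∈ Finset.univ) =>
      Finset.sum_le_sum (fun y hy => hterm x y hy))
    linarith
  -- lower bound
  have hlower : ∀ ε : ℝ, 0 < ε → Cap 1 - C * ε ≤ Cap (1 + ε) := by
    intro ε hε
    conv_lhs => rw [hCap]
    rw [hCap (1 + ε)]
    apply le_csInf (hfeas (1 + ε))
    rintro E ⟨f, hfA, hfB, hf01, rfl⟩
    rw [sub_le_iff_le_add]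
    have hmem : ((1 / 2) * ∑ x, ∑ y ∈ G.neighborFinset x,
        r x y * |f x - f y| ^ (1:ℝ) : ℝ) ∈ S 1 := ⟨f, hfA, hfB, hf01, rfl⟩
    refine le_trans (csInf_le (hbdd _) hmem) ?_
    have hterm : ∀ x y, y ∈ G.neighborFinset x →
        r x y * |f x - f y| ^ (1:ℝ) ≤ r x y * |f x - f y| ^ (1 + ε) + r x y * ε := by
      intro x y hy
      have hd1 : |f x - f y| ≤ 1 := by
        rcases hf01 x with ⟨h1, h2⟩; rcases hf01 y with ⟨h3, h4⟩
        rw [abs_le]; constructor <;> linarith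
      have := cap_key_ineq (abs_nonneg (f x - f y)) hd1 hε
      rw [Real.rpow_one]
      nlinarith [hrE x y hy]
    have hsum := Finset.sum_le_sum (fun x (_ : x ∈ Finset.univ) =>
      Finset.sum_le_sum (fun y hy => hterm x y hy))
    have hsplit : ∑ x, ∑ y ∈ G.neighborFinset x,
        (r x y * |f x - f y| ^ (1 + ε) + r x y * ε)
        = (∑ x, ∑ y ∈ G.neighborFinset x, r x y * |f x - f y| ^ (1 + ε))
          + (∑ x, ∑ y ∈ G.neighborFinset x, r x y) * ε := by
      simp only [Finset.sum_add_distrib, ← Finset.sum_mul]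
    rw [hsplit] at hsum
    rw [hC]
    linarith
  -- squeeze
  have hg : Tendsto (fun ε : ℝ => Cap 1 - C * ε) (nhdsWithin 0 (Set.Ioi 0))
      (nhds (Cap 1)) := by
    have : Tendsto (fun ε : ℝ => Cap 1 - C * ε) (nhds 0) (nhds (Cap 1 - C * 0)) := by
      exact (tendsto_const_nhds.sub (tendsto_const_nhds.mul tendsto_id))
    simpa using this.mono_left nhdsWithin_le_nhds
  refine tendsto_of_tendsto_of_tendsto_of_le_of_le' hg tendsto_const_nhds ?_ ?_
  · filter_upwards [self_mem_nhdsWithin] with ε hε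
    exact hlower ε hε
  · filter_upwards [self_mem_nhdsWithin] with ε hε
    exact hupper ε hε
end

section
/- Let d ≥ 2, q = d/(d-1), and g(x) = (1/q)·log(∑_{i=1}^d |x_i|^q) on ℝ^d \ {0}. Then for each i, ∂g/∂x_i(x) = |x_i|^{q-1}·sign(x_i)/|x|_q^q, and the vector field Θ with components Θ_i(x) = |∂g/∂x_i(x)|^{d-2}·∂g/∂x_i(x) = x_i/|x|_q^d satisfies div Θ(x) = 0 for all x ≠ 0. In other words, g is d-harmonic on ℝ^d \ {0} for the operator Δ_p u = div((|∂u/∂x_i|^{p-2}∂u/∂x_i)_i) with p=d. -/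
/-!
Along the `i`-th coordinate line only the term `|x_i|^q` of `S = ∑ j, |x_j|^q` varies, and
`d/dt |t|^q = q |t|^(q-1) sign t`; hence `∂_i g = |x_i|^(q-1) sign x_i / S`. As `(q-1)(d-1) = 1`,
raising to the power `d-1` (with sign) gives `Θ_i = x_i / S^(d-1)`. By Euler's identity
`t · d/dt |t|^q = q |t|^q`, `∂_i Θ_i = (S - (d-1) q |x_i|^q) / S^d`, and since `(d-1) q = d`
these sum to `(d S - d S) / S^d = 0`.
-/

open Finset Function

theorem Real.abs_mul_sign (x : ℝ) : |x| * Real.sign x = x := by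
  rcases lt_trichotomy x 0 with hx | rfl | hx
  · simp [Real.sign_of_neg hx, abs_of_neg hx]
  · simp
  · simp [Real.sign_of_pos hx, abs_of_pos hx]

theorem Real.self_mul_sign (x : ℝ) : x * Real.sign x = |x| := by
  rcases lt_trichotomy x 0 with hx | rfl | hx
  · simp [Real.sign_of_neg hx, abs_of_neg hx]
  · simp
  · simp [Real.sign_of_pos hx, abs_of_pos hx]

theorem Real.abs_sign_of_ne_zero {x : ℝ} (hx : x ≠ 0) : |Real.sign x| = 1 := by
  rcases Real.sign_apply_eq_of_ne_zero x hx with h | h <;> simp [h]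

theorem abs_rpow_sub_two_mul_self (q x : ℝ) :
    |x| ^ (q - 2) * x = |x| ^ (q - 1) * Real.sign x := by
  rcases eq_or_ne x 0 with rfl | hx
  · simp
  · rw [show q - 1 = q - 2 + 1 by ring, Real.rpow_add_one (abs_ne_zero.2 hx), mul_assoc,
      Real.abs_mul_sign]

theorem hasDerivAt_abs_rpow' {q : ℝ} (hq : 1 < q) (x : ℝ) :
    HasDerivAt (fun t => |t| ^ q) (q * (|x| ^ (q - 1) * Real.sign x)) x := by
  simpa only [mul_assoc, abs_rpow_sub_two_mul_self] using hasDerivAt_abs_rpow x hq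

theorem self_mul_abs_rpow_sub_one_mul_sign {q : ℝ} (hq : q ≠ 0) (x : ℝ) :
    x * (|x| ^ (q - 1) * Real.sign x) = |x| ^ q := by
  rcases eq_or_ne x 0 with rfl | hx
  · simp [Real.zero_rpow hq]
  · rw [mul_left_comm, Real.self_mul_sign, ← Real.rpow_add_one (abs_ne_zero.2 hx),
      sub_add_cancel]

theorem abs_rpow_mul_sign_rpow {α β : ℝ} (h : α * (β + 1) = 1) (a : ℝ) :
    |(|a| ^ α * Real.sign a)| ^ β * (|a| ^ α * Real.sign a) = a := by
  rcases eq_or_ne a 0 with rfl | ha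
  · simp
  · rw [abs_mul, Real.abs_sign_of_ne_zero ha, mul_one, abs_of_nonneg (by positivity),
      ← Real.rpow_mul (abs_nonneg a), ← mul_assoc, ← Real.rpow_add (abs_pos.2 ha),
      show α * β + α = 1 by linear_combination h, Real.rpow_one, Real.abs_mul_sign]

theorem abs_div_rpow_mul_div {S : ℝ} (hS : 0 < S) (β u : ℝ) :
    |u / S| ^ β * (u / S) = |u| ^ β * u / S ^ (β + 1) := by
  rw [abs_div, abs_of_pos hS, Real.div_rpow (abs_nonneg u) hS.le, Real.rpow_add_one hS.ne',
    div_mul_div_comm]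

theorem Finset.sum_comp_update {ι β M : Type*} [Fintype ι] [DecidableEq ι] [AddCommMonoid M]
    (f : β → M) (x : ι → β) (i : ι) (t : β) :
    ∑ j, f (update x i t j) = f t + ∑ j ∈ univ.erase i, f (x j) := by
  rw [← add_sum_erase _ _ (mem_univ i), update_self]
  congr 1
  exact sum_congr rfl fun j hj => by rw [update_of_ne (ne_of_mem_erase hj)]

theorem sum_abs_rpow_pos {ι : Type*} [Fintype ι] {q : ℝ} {x : ι → ℝ} (hx : x ≠ 0) :
    0 < ∑ j, |x j| ^ q := by
  obtain ⟨i, hi⟩ := Function.ne_iff.mp hx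
  exact sum_pos' (fun j _ => by positivity)
    ⟨i, mem_univ i, Real.rpow_pos_of_pos (abs_pos.2 hi) q⟩

section CoordinateLines

variable {ι : Type*} [Fintype ι] [DecidableEq ι] {q : ℝ} (x : ι → ℝ) (i : ι)

theorem hasDerivAt_sum_abs_rpow_update (hq : 1 < q) :
    HasDerivAt (fun t => ∑ j, |update x i t j| ^ q)
      (q * (|x i| ^ (q - 1) * Real.sign (x i))) (x i) := by
  simp only [sum_comp_update (fun s : ℝ => |s| ^ q) x i]
  exact (hasDerivAt_abs_rpow' hq (x i)).add_const _

theorem hasDerivAt_log_sum_abs_rpow_update (hq : 1 < q) (hx : x ≠ 0) :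
    HasDerivAt (fun t => q⁻¹ * Real.log (∑ j, |update x i t j| ^ q))
      (|x i| ^ (q - 1) * Real.sign (x i) / ∑ j, |x j| ^ q) (x i) := by
  have hS := sum_abs_rpow_pos (q := q) hx
  have h := (hasDerivAt_sum_abs_rpow_update x i hq).log
    (by simpa only [update_eq_self] using hS.ne')
  rw [update_eq_self] at h
  refine (h.const_mul q⁻¹).congr_deriv ?_
  field_simp

theorem hasDerivAt_div_sum_abs_rpow_update_rpow (hq : 1 < q) (hx : x ≠ 0) (p : ℝ) :
    HasDerivAt (fun t => t / (∑ j, |update x i t j| ^ q) ^ p)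
      (((∑ j, |x j| ^ q) ^ p - p * q * |x i| ^ q * (∑ j, |x j| ^ q) ^ (p - 1)) /
        ((∑ j, |x j| ^ q) ^ p) ^ 2) (x i) := by
  have hS := sum_abs_rpow_pos (q := q) hx
  have hT := (hasDerivAt_sum_abs_rpow_update x i hq).rpow_const (p := p)
    (Or.inl (by simpa only [update_eq_self] using hS.ne'))
  have h := (hasDerivAt_id (x i)).div hT
    (by simpa only [update_eq_self] using (Real.rpow_pos_of_pos hS p).ne')
  simp only [update_eq_self, id, one_mul] at h
  refine h.congr_deriv ?_
  rw [← self_mul_abs_rpow_sub_one_mul_sign (q := q) (by linarith) (x i)]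
  ring

theorem sum_deriv_div_sum_abs_rpow_update_rpow (hq : 1 < q) (hx : x ≠ 0) {p : ℝ}
    (hpq : p * q = Fintype.card ι) :
    ∑ i, deriv (fun t => t / (∑ j, |update x i t j| ^ q) ^ p) (x i) = 0 := by
  have hS := sum_abs_rpow_pos (q := q) hx
  simp only [fun i => (hasDerivAt_div_sum_abs_rpow_update_rpow x i hq hx p).deriv]
  have hSp : (∑ j, |x j| ^ q) * (∑ j, |x j| ^ q) ^ (p - 1) = (∑ j, |x j| ^ q) ^ p := by
    rw [Real.rpow_sub_one hS.ne', mul_div_cancel₀ _ hS.ne']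
  rw [← sum_div, sum_sub_distrib, ← sum_mul, ← mul_sum, sum_const, card_univ, nsmul_eq_mul,
    ← hSp, ← hpq]
  ring

end CoordinateLines

/-- The function g(x) = (1/q)·log(∑|x_i|^q) with q = d/(d-1) has partial derivatives
∂_i g(x) = |x_i|^{q-1} sign(x_i)/|x|_q^q, the associated vector field
Θ_i(x) = |∂_i g|^{d-2} ∂_i g = x_i/|x|_q^d, and div Θ = 0 away from 0;
i.e. g is d-harmonic on ℝ^d \ {0}. (Note |x|_q^q = ∑_j |x_j|^q and
|x|_q^d = (∑_j |x_j|^q)^{d-1} since q(d-1) = d.) -/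
theorem g_is_d_harmonic (d : ℕ) (hd : 2 ≤ d) (q : ℝ) (hq : q = d / ((d : ℝ) - 1))
    (g : (Fin d → ℝ) → ℝ)
    (hg : ∀ x : Fin d → ℝ, g x = q⁻¹ * Real.log (∑ i, |x i| ^ q)) :
    ∀ x : Fin d → ℝ, x ≠ 0 →
      (∀ i, deriv (fun t => g (Function.update x i t)) (x i) =
        |x i| ^ (q - 1) * Real.sign (x i) / (∑ j, |x j| ^ q)) ∧
      (∀ i, |deriv (fun t => g (Function.update x i t)) (x i)| ^ ((d : ℝ) - 2) *
          deriv (fun t => g (Function.update x i t)) (x i) =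
        x i / (∑ j, |x j| ^ q) ^ ((d : ℝ) - 1)) ∧
      (∑ i, deriv
          (fun t => t / (∑ j, |Function.update x i t j| ^ q) ^ ((d : ℝ) - 1)) (x i) = 0) := by
  have hd' : (2 : ℝ) ≤ d := by exact_mod_cast hd
  have hd1 : (0 : ℝ) < d - 1 := by linarith
  have hq1 : 1 < q := by rw [hq, lt_div_iff₀ hd1]; linarith
  have hqd : (q - 1) * ((d : ℝ) - 2 + 1) = 1 := by rw [hq]; field_simp [hd1.ne']; ring
  intro x hx
  have hpartial : ∀ i, deriv (fun t => g (update x i t)) (x i) =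
      |x i| ^ (q - 1) * Real.sign (x i) / ∑ j, |x j| ^ q := fun i => by
    simp only [hg]
    exact (hasDerivAt_log_sum_abs_rpow_update x i hq1 hx).deriv
  refine ⟨hpartial, fun i => ?_, sum_deriv_div_sum_abs_rpow_update_rpow x hq1 hx ?_⟩
  · rw [hpartial, abs_div_rpow_mul_div (sum_abs_rpow_pos hx), abs_rpow_mul_sign_rpow hqd,
      show (d : ℝ) - 2 + 1 = d - 1 by ring]
  · rw [Fintype.card_fin, hq]
    field_simp [hd1.ne']
end
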